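/- arXiv:1301.1667 — 8 statements merged into one kernel-verified Lean document; each statement's English description precedes it below -/
import Mathlib

section
/- On the open interval (1,∞), the function θ is infinitely differentiable and concave. -/
open Real Set Filter Topology

/-- The auxiliary function `g t = -log(1-t)/t`, inverse to the survival probability. -/
noncomputable def pgwAux (t : ℝ) : ℝ := -Real.log (1 - t) / t

lemma pgwAux_hasSum {t : ℝ} (ht : t ∈ Set.Ioo (0:ℝ) 1) :
    HasSum (fun k : ℕ => t ^ k / (k + 1)) (pgwAux t) := by
  have habs : |t| < 1 := by rw [abs_of_pos ht.1]; exact ht.2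
  have ht0 : t ≠ 0 := ne_of_gt ht.1
  have h := (Real.hasSum_pow_div_log_of_abs_lt_one habs).div_const t
  have heq : (fun n : ℕ => t ^ (n + 1) / (n + 1) / t) = fun k : ℕ => t ^ k / (k + 1) := by
    funext k
    rw [pow_succ]
    field_simp
  rw [heq] at h
  exact h

lemma pgwAux_strictMonoOn : StrictMonoOn pgwAux (Set.Ioo (0:ℝ) 1) := by
  intro s hs t ht hst
  refine hasSum_lt (i := 1) (fun k => ?_) ?_ (pgwAux_hasSum hs) (pgwAux_hasSum ht)
  · have hpow : s ^ k ≤ t ^ k := pow_le_pow_left₀ hs.1.le hst.le k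
    have hk : (0:ℝ) < (k:ℝ) + 1 := by positivity
    exact (div_le_div_iff_of_pos_right hk).mpr hpow
  · simp only [pow_one]
    have : (0:ℝ) < 1 + 1 := by norm_num
    gcongr

lemma pgwAux_convexOn : ConvexOn ℝ (Set.Ioo (0:ℝ) 1) pgwAux := by
  refine ⟨convex_Ioo _ _, ?_⟩
  intro x hx y hy a b ha hb hab
  have hz : a • x + b • y ∈ Set.Ioo (0:ℝ) 1 := (convex_Ioo (0:ℝ) 1) hx hy ha hb hab
  have Hz := pgwAux_hasSum hz
  have H := ((pgwAux_hasSum hx).mul_left a).add ((pgwAux_hasSum hy).mul_left b)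
  refine hasSum_le (fun k => ?_) Hz H
  have hpow : (a • x + b • y) ^ k ≤ a • x ^ k + b • y ^ k :=
    (convexOn_pow k).2 (le_of_lt hx.1) (le_of_lt hy.1) ha hb hab
  simp only [smul_eq_mul] at hpow ⊢
  have hk : (0:ℝ) < (k:ℝ) + 1 := by positivity
  calc (a * x + b * y) ^ k / ((k:ℝ) + 1) ≤ (a * x ^ k + b * y ^ k) / ((k:ℝ) + 1) := by
        gcongr
    _ = a * (x ^ k / ((k:ℝ) + 1)) + b * (y ^ k / ((k:ℝ) + 1)) := by ring

/-- The survival probability `θ` of a Poisson Galton–Watson tree, characterized by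
`θ(λ) ∈ (0,1)` and `1 - θ(λ) = exp(-λ·θ(λ))` for `λ > 1`, is infinitely
differentiable and concave on the open interval `(1, ∞)`. -/
theorem pgw_survival_smooth_concave
    (θ : ℝ → ℝ)
    (hθ : ∀ x : ℝ, 1 < x → θ x ∈ Set.Ioo (0 : ℝ) 1 ∧ 1 - θ x = Real.exp (-(x * θ x))) :
    ContDiffOn ℝ (⊤ : ℕ∞) θ (Set.Ioi (1 : ℝ)) ∧ ConcaveOn ℝ (Set.Ioi (1 : ℝ)) θ := by
  -- For x > 1, pgwAux (θ x) = x
  have hgθ : ∀ x : ℝ, 1 < x → pgwAux (θ x) = x := by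
    intro x hx
    obtain ⟨ht, heq⟩ := hθ x hx
    have hlog : Real.log (1 - θ x) = -(x * θ x) := by
      rw [heq, Real.log_exp]
    have ht0 : θ x ≠ 0 := ne_of_gt ht.1
    rw [pgwAux, hlog]
    field_simp
  constructor
  · -- smoothness
    intro x₀ hx₀
    have hx₀' : (1:ℝ) < x₀ := hx₀
    obtain ⟨ht₀, -⟩ := hθ x₀ hx₀'
    set t₀ := θ x₀ with ht₀def
    have h1t : (0:ℝ) < 1 - t₀ := by linarith [ht₀.2]
    have ht0 : t₀ ≠ 0 := ne_of_gt ht₀.1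
    -- pgwAux is smooth at t₀
    have hcd : ContDiffAt ℝ (⊤ : ℕ∞) pgwAux t₀ := by
      have hlog : ContDiffAt ℝ (⊤ : ℕ∞) (fun t : ℝ => -Real.log (1 - t)) t₀ := by
        have : ContDiffAt ℝ (⊤ : ℕ∞) (fun t : ℝ => Real.log (1 - t)) t₀ :=
          (Real.contDiffAt_log.2 (ne_of_gt h1t)).comp t₀
            ((contDiffAt_const (c := (1:ℝ))).sub contDiffAt_id)
        exact this.neg
      exact hlog.div contDiffAt_id ht0
    -- pgwAux has positive derivative at t₀
    have hN : HasDerivAt (fun t : ℝ => -Real.log (1 - t)) (1 / (1 - t₀)) t₀ := by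
      have hinner : HasDerivAt (fun t : ℝ => 1 - t) (-1) t₀ := by
        simpa using (hasDerivAt_id t₀).const_sub (1:ℝ)
      have := (Real.hasDerivAt_log (ne_of_gt h1t)).comp t₀ hinner
      exact this.neg.congr_deriv (by ring)
    have hD : HasDerivAt pgwAux
        ((1 / (1 - t₀) * t₀ - -Real.log (1 - t₀) * 1) / t₀ ^ 2) t₀ :=
      hN.div (hasDerivAt_id t₀) ht0
    set d := (1 / (1 - t₀) * t₀ - -Real.log (1 - t₀) * 1) / t₀ ^ 2 with hd
    have hdpos : 0 < d := by
      have hlb : Real.log (1 - t₀) > 1 - (1 - t₀)⁻¹ := by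
        have h1 : Real.log (1 - t₀)⁻¹ < (1 - t₀)⁻¹ - 1 :=
          Real.log_lt_sub_one_of_pos (by positivity) (by
            intro h
            have : (1:ℝ) - t₀ = 1 := by
              field_simp at h
              linarith
            linarith [ht₀.1])
        rw [Real.log_inv] at h1
        linarith
      have hnum : 0 < 1 / (1 - t₀) * t₀ - -Real.log (1 - t₀) * 1 := by
        have : (1:ℝ) - (1 - t₀)⁻¹ = -(t₀ / (1 - t₀)) := by field_simp; ring
        rw [this] at hlb
        have h2 : -Real.log (1 - t₀) < t₀ / (1 - t₀) := by linarith
        have h3 : 1 / (1 - t₀) * t₀ = t₀ / (1 - t₀) := by ring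
        linarith
      rw [hd]
      positivity
    have hdne : d ≠ 0 := ne_of_gt hdpos
    -- inverse function theorem
    have hfd : HasFDerivAt pgwAux
        (↑(ContinuousLinearEquiv.unitsEquivAut ℝ (Units.mk0 d hdne)) : ℝ →L[ℝ] ℝ) t₀ :=
      hD.hasFDerivAt_equiv hdne
    have hn : ((⊤ : ℕ∞) : WithTop ℕ∞) ≠ 0 := by simp
    have hloc : ContDiffAt ℝ (⊤ : ℕ∞) (hcd.localInverse hfd hn) (pgwAux t₀) :=
      hcd.to_localInverse hfd hn
    set φ := hcd.localInverse hfd hn with hφdef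
    have hstrict := hcd.hasStrictFDerivAt' hfd hn
    have hφcont : ContinuousAt φ (pgwAux t₀) := hstrict.localInverse_continuousAt
    have hφt₀ : φ (pgwAux t₀) = t₀ := hstrict.localInverse_apply_image
    have hre : ∀ᶠ y in 𝓝 (pgwAux t₀), pgwAux (φ y) = y := hstrict.eventually_right_inverse
    have hgx : pgwAux t₀ = x₀ := hgθ x₀ hx₀'
    rw [hgx] at hloc hφcont hφt₀ hre
    -- eventually θ = φ near x₀
    have hev1 : ∀ᶠ y in 𝓝 x₀, φ y ∈ Set.Ioo (0:ℝ) 1 := by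
      have : Set.Ioo (0:ℝ) 1 ∈ 𝓝 t₀ := isOpen_Ioo.mem_nhds ht₀
      have := hφcont.preimage_mem_nhds (hφt₀ ▸ this)
      exact this
    have hev2 : ∀ᶠ y in 𝓝 x₀, (1:ℝ) < y := isOpen_Ioi.eventually_mem hx₀
    have heq : θ =ᶠ[𝓝 x₀] φ := by
      filter_upwards [hev1, hev2, hre] with y hφy hy hry
      have hθy := (hθ y hy).1
      have : pgwAux (θ y) = pgwAux (φ y) := by rw [hgθ y hy, hry]
      exact pgwAux_strictMonoOn.injOn hθy hφy this
    exact (hloc.congr_of_eventuallyEq heq).contDiffWithinAt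
  · -- concavity
    refine ⟨convex_Ioi _, ?_⟩
    intro x hx y hy a b ha hb hab
    have hx' : (1:ℝ) < x := hx
    have hy' : (1:ℝ) < y := hy
    have hz : a • x + b • y ∈ Set.Ioi (1:ℝ) := (convex_Ioi (1:ℝ)) hx hy ha hb hab
    have hz' : (1:ℝ) < a • x + b • y := hz
    have hu : a • θ x + b • θ y ∈ Set.Ioo (0:ℝ) 1 :=
      (convex_Ioo (0:ℝ) 1) (hθ x hx').1 (hθ y hy').1 ha hb hab
    have hθz := (hθ _ hz').1
    have h1 : pgwAux (a • θ x + b • θ y) ≤ a • pgwAux (θ x) + b • pgwAux (θ y) :=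
      pgwAux_convexOn.2 (hθ x hx').1 (hθ y hy').1 ha hb hab
    rw [hgθ x hx', hgθ y hy'] at h1
    have h2 : pgwAux (a • θ x + b • θ y) ≤ pgwAux (θ (a • x + b • y)) := by
      rw [hgθ _ hz']
      exact h1
    exact (pgwAux_strictMonoOn.le_iff_le hu hθz).mp h2
end

section
/- For every real λ > 1, θ(λ) ≤ 2(λ − 1). -/
lemma exp_neg_hasDerivAt (x : ℝ) :
    HasDerivAt (fun y : ℝ => Real.exp (-y)) (-Real.exp (-x)) x := by
  exact ((Real.hasDerivAt_exp (-x)).comp x (hasDerivAt_neg x)).congr_deriv (by ring)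

lemma exp_neg_le_quadratic {x : ℝ} (hx : 0 ≤ x) :
    Real.exp (-x) ≤ 1 - x + x ^ 2 / 2 := by
  have hF : ∀ y : ℝ, HasDerivAt (fun y : ℝ => 1 - y + y ^ 2 / 2 - Real.exp (-y))
      (-1 + y + Real.exp (-y)) y := by
    intro y
    have h2 : HasDerivAt (fun y : ℝ => 1 - y + y ^ 2 / 2) (-1 + y) y := by
      have := (((hasDerivAt_id y).const_sub 1).add
        (((hasDerivAt_id y).pow 2).div_const 2))
      exact this.congr_deriv (by simp [id_eq] <;> ring)
    exact (h2.sub (exp_neg_hasDerivAt y)).congr_deriv (by ring)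
  have hmono : Monotone (fun y : ℝ => 1 - y + y ^ 2 / 2 - Real.exp (-y)) := by
    apply monotone_of_deriv_nonneg
    · exact fun y => (hF y).differentiableAt
    · intro y
      rw [(hF y).deriv]
      have := Real.add_one_le_exp (-y)
      linarith
  have h0 := hmono hx
  simp only at h0
  have : (1 : ℝ) - 0 + 0 ^ 2 / 2 - Real.exp (-0) = 0 := by norm_num
  rw [this] at h0
  linarith

lemma cubic_le_exp_neg {x : ℝ} (hx : 0 ≤ x) :
    1 - x + x ^ 2 / 2 - x ^ 3 / 6 ≤ Real.exp (-x) := by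
  have hF : ∀ y : ℝ, HasDerivAt
      (fun y : ℝ => Real.exp (-y) - (1 - y + y ^ 2 / 2 - y ^ 3 / 6))
      (-Real.exp (-y) + 1 - y + y ^ 2 / 2) y := by
    intro y
    have h2 : HasDerivAt (fun y : ℝ => 1 - y + y ^ 2 / 2 - y ^ 3 / 6)
        (-1 + y - y ^ 2 / 2) y := by
      have := ((((hasDerivAt_id y).const_sub 1).add
        (((hasDerivAt_id y).pow 2).div_const 2)).sub
        (((hasDerivAt_id y).pow 3).div_const 6))
      exact this.congr_deriv (by simp [id_eq] <;> ring)
    exact ((exp_neg_hasDerivAt y).sub h2).congr_deriv (by ring)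
  have hmono : MonotoneOn (fun y : ℝ => Real.exp (-y) - (1 - y + y ^ 2 / 2 - y ^ 3 / 6))
      (Set.Ici (0 : ℝ)) := by
    apply monotoneOn_of_deriv_nonneg (convex_Ici 0)
    · exact Continuous.continuousOn (by continuity)
    · intro y _
      exact (hF y).differentiableAt.differentiableWithinAt
    · intro y hy
      rw [interior_Ici] at hy
      rw [(hF y).deriv]
      have := exp_neg_le_quadratic (le_of_lt hy)
      linarith
  have h0 := hmono (Set.self_mem_Ici) hx hx
  simp only at h0
  have : Real.exp (-0) - ((1 : ℝ) - 0 + 0 ^ 2 / 2 - 0 ^ 3 / 6) = 0 := by norm_num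
  rw [this] at h0
  linarith

/-- For every `λ > 1`, the Poisson Galton–Watson survival probability satisfies
`θ(λ) ≤ 2(λ − 1)`. -/
theorem pgw_survival_le_two_mul
    (θ : ℝ → ℝ)
    (hθ : ∀ x : ℝ, 1 < x → θ x ∈ Set.Ioo (0 : ℝ) 1 ∧ 1 - θ x = Real.exp (-(x * θ x))) :
    ∀ l : ℝ, 1 < l → θ l ≤ 2 * (l - 1) := by
  intro l hl
  obtain ⟨⟨ht0, ht1⟩, heq⟩ := hθ l hl
  set t := θ l with htdef
  by_cases hcase : (3 : ℝ) / 2 ≤ l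
  · linarith
  push_neg at hcase
  by_contra hcon
  push_neg at hcon
  set s : ℝ := 2 * (l - 1) with hsdef
  have hs0 : 0 < s := by simp [hsdef]; linarith
  have hst : s < t := hcon
  have hl0 : 0 < l := by linarith
  -- strict convexity of exp at points 0 and -(l*t)
  have hb0 : 0 < s / t := div_pos hs0 ht0
  have hb1 : s / t < 1 := (div_lt_one ht0).mpr hst
  have ha0 : 0 < 1 - s / t := by linarith
  have hab : (1 - s / t) + s / t = 1 := by ring
  have hne : (0 : ℝ) ≠ -(l * t) := by
    have : 0 < l * t := mul_pos hl0 ht0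
    intro h; linarith
  have hconv := strictConvexOn_exp.2 (Set.mem_univ (0 : ℝ))
    (Set.mem_univ (-(l * t))) hne ha0 hb0 hab
  simp only [smul_eq_mul, mul_zero, zero_add, Real.exp_zero, mul_one] at hconv
  -- hconv : exp (s/t * -(l*t)) < (1 - s/t) + s/t * exp (-(l*t))
  have harg : s / t * -(l * t) = -(l * s) := by
    field_simp
  rw [harg, ← heq] at hconv
  have hrhs : (1 - s / t) + s / t * (1 - t) = 1 - s := by
    field_simp
    ring
  rw [hrhs] at hconv
  -- hconv : exp (-(l*s)) < 1 - s
  have hls : 0 ≤ l * s := le_of_lt (mul_pos hl0 hs0)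
  have hcub := cubic_le_exp_neg hls
  -- 1 - l*s + (l*s)^2/2 - (l*s)^3/6 ≤ exp(-(l*s)) < 1 - s
  have hkey : 1 - l * s + (l * s) ^ 2 / 2 - (l * s) ^ 3 / 6 < 1 - s := lt_of_le_of_lt hcub hconv
  rw [hsdef] at hkey
  have hu : (0:ℝ) < l - 1 := by linarith
  have h1 : 2 * l ^ 3 ≤ 3 * (l + 1) := by
    nlinarith [sq_nonneg (l - 3/2), sq_nonneg (l - 1), mul_pos hu hu,
      mul_pos (sub_pos.mpr hcase) hu]
  have h2 : (3 * (l + 1) - 2 * l ^ 3) * (l - 1) ^ 3 ≥ 0 :=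
    mul_nonneg (by linarith) (by positivity)
  nlinarith [h2, hu]
end

section
/- For every real λ > 1, the function θ is differentiable at λ and its derivative satisfies θ′(λ) = θ(λ)·(1 − θ(λ))/(1 − λ*) = θ(λ)·λ*/(λ·(1 − λ*)). -/
open Real Set Filter

private noncomputable def gfun : ℝ → ℝ := fun t => -Real.log (1 - t) / t

private lemma gfun_hasDerivAt {t : ℝ} (h0 : 0 < t) (h1 : t < 1) :
    HasDerivAt gfun ((t / (1 - t) + Real.log (1 - t)) / t ^ 2) t := by
  have h1t : (1 : ℝ) - t ≠ 0 := by linarith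
  have hlog : HasDerivAt (fun s : ℝ => -Real.log (1 - s)) (1 / (1 - t)) t := by
    have h : HasDerivAt (fun s : ℝ => 1 - s) (-1) t := by
      simpa using (hasDerivAt_id t).const_sub 1
    have h2 := ((Real.hasDerivAt_log h1t).comp t h).neg
    refine h2.congr_deriv ?_
    field_simp
  have h3 := hlog.div (hasDerivAt_id t) (ne_of_gt h0)
  refine h3.congr_deriv ?_
  simp only [id_eq]
  field_simp
  ring

private lemma phi_pos {t : ℝ} (h0 : 0 < t) (h1 : t < 1) :
    0 < t / (1 - t) + Real.log (1 - t) := by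
  have key : StrictMonoOn (fun s : ℝ => s / (1 - s) + Real.log (1 - s)) (Set.Ico 0 1) := by
    have hder : ∀ x ∈ Set.Ico (0:ℝ) 1,
        HasDerivAt (fun s : ℝ => s / (1 - s) + Real.log (1 - s)) (x / (1 - x) ^ 2) x := by
      intro x hx
      have h1x : (1 : ℝ) - x ≠ 0 := by
        have := hx.2; intro hc; linarith
      have hsub : HasDerivAt (fun s : ℝ => 1 - s) (-1) x := by
        simpa using (hasDerivAt_id x).const_sub 1
      have hdiv := (hasDerivAt_id x).div hsub h1x
      have hlog := (Real.hasDerivAt_log h1x).comp x hsub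
      have := hdiv.add hlog
      refine this.congr_deriv ?_
      simp only [id_eq]
      field_simp
      ring
    apply strictMonoOn_of_deriv_pos (convex_Ico 0 1)
    · intro x hx
      exact (hder x hx).continuousAt.continuousWithinAt
    · intro x hx
      rw [interior_Ico] at hx
      rw [(hder x ⟨hx.1.le, hx.2⟩).deriv]
      have h1x : (0:ℝ) < 1 - x := by linarith [hx.2]
      exact div_pos hx.1 (pow_pos h1x 2)
  have := key (Set.left_mem_Ico.mpr one_pos) ⟨h0.le, h1⟩ h0
  simpa using this

private lemma gfun_strictMono : StrictMonoOn gfun (Set.Ioo 0 1) := by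
  apply strictMonoOn_of_deriv_pos (convex_Ioo 0 1)
  · intro x hx
    exact (gfun_hasDerivAt hx.1 hx.2).continuousAt.continuousWithinAt
  · intro x hx
    rw [interior_Ioo] at hx
    rw [(gfun_hasDerivAt hx.1 hx.2).deriv]
    have := phi_pos hx.1 hx.2
    exact div_pos this (pow_pos hx.1 2)

private lemma texp_hasDerivAt (t : ℝ) :
    HasDerivAt (fun s : ℝ => s * Real.exp (-s)) ((1 - t) * Real.exp (-t)) t := by
  have hexp : HasDerivAt (fun s : ℝ => Real.exp (-s)) (-Real.exp (-t)) t := by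
    have := (Real.hasDerivAt_exp (-t)).comp t ((hasDerivAt_id t).neg)
    refine this.congr_deriv ?_; ring
  have := (hasDerivAt_id t).mul hexp
  refine this.congr_deriv ?_
  simp only [id_eq]
  ring

private lemma texp_strictMonoOn :
    StrictMonoOn (fun s : ℝ => s * Real.exp (-s)) (Set.Icc 0 1) := by
  apply strictMonoOn_of_deriv_pos (convex_Icc 0 1)
  · intro x _; exact (texp_hasDerivAt x).continuousAt.continuousWithinAt
  · intro x hx
    rw [interior_Icc] at hx
    rw [(texp_hasDerivAt x).deriv]
    have : (0:ℝ) < 1 - x := by linarith [hx.2]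
    positivity

private lemma texp_strictAntiOn :
    StrictAntiOn (fun s : ℝ => s * Real.exp (-s)) (Set.Ici 1) := by
  apply strictAntiOn_of_deriv_neg (convex_Ici 1)
  · intro x _; exact (texp_hasDerivAt x).continuousAt.continuousWithinAt
  · intro x hx
    rw [interior_Ici] at hx
    rw [(texp_hasDerivAt x).deriv]
    have h1 : (1:ℝ) - x < 0 := by linarith [hx.out]
    have h2 : (0:ℝ) < Real.exp (-x) := Real.exp_pos _
    nlinarith

/-- For every `λ > 1`, the Poisson Galton–Watson survival probability `θ` is
differentiable at `λ` with
`θ′(λ) = θ(λ)(1 − θ(λ))/(1 − λ*) = θ(λ)·λ*/(λ(1 − λ*))`,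
where `λ ↦ λ*` is the dual parameter. -/
theorem pgw_survival_hasDerivAt
    (θ d : ℝ → ℝ)
    (hθ : ∀ x : ℝ, 1 < x → θ x ∈ Set.Ioo (0 : ℝ) 1 ∧ 1 - θ x = Real.exp (-(x * θ x)))
    (hd : ∀ c : ℝ, 1 < c →
      d c ∈ Set.Ioo (0 : ℝ) 1 ∧ c * Real.exp (-c) = d c * Real.exp (-(d c))) :
    ∀ l : ℝ, 1 < l →
      HasDerivAt θ (θ l * (1 - θ l) / (1 - d l)) l ∧
      θ l * (1 - θ l) / (1 - d l) = θ l * d l / (l * (1 - d l)) := by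
  intro l hl
  obtain ⟨⟨hθ0, hθ1⟩, hθe⟩ := hθ l hl
  obtain ⟨⟨hd0, hd1⟩, hde⟩ := hd l hl
  have hl0 : (0:ℝ) < l := lt_trans one_pos hl
  have h1t : (0:ℝ) < 1 - θ l := by linarith
  -- key identity: d l = l * (1 - θ l)
  have hch : (l * (1 - θ l)) * Real.exp (-(l * (1 - θ l))) = l * Real.exp (-l) := by
    have e1 : Real.exp (-(l * θ l)) * Real.exp (-(l * (1 - θ l))) = Real.exp (-l) := by
      rw [← Real.exp_add]; congr 1; ring
    calc (l * (1 - θ l)) * Real.exp (-(l * (1 - θ l)))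
        = l * (Real.exp (-(l * θ l)) * Real.exp (-(l * (1 - θ l)))) := by rw [← hθe]; ring
      _ = l * Real.exp (-l) := by rw [e1]
  have hkey : d l = l * (1 - θ l) := by
    by_cases hc1 : l * (1 - θ l) ≤ 1
    · have hc0 : 0 < l * (1 - θ l) := by positivity
      exact texp_strictMonoOn.injOn ⟨hd0.le, hd1.le⟩ ⟨hc0.le, hc1⟩
        (by simpa using (hde.symm.trans hch.symm))
    · exfalso
      push_neg at hc1
      have heq : l * (1 - θ l) = l :=
        texp_strictAntiOn.injOn (Set.mem_Ici.mpr hc1.le) (Set.mem_Ici.mpr hl.le) (by simpa using hch)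
      nlinarith
  have hdl1 : (0:ℝ) < 1 - d l := by linarith
  -- g inverts θ
  have hginv : ∀ x : ℝ, 1 < x → gfun (θ x) = x := by
    intro x hx
    obtain ⟨⟨h0, _⟩, he⟩ := hθ x hx
    show -Real.log (1 - θ x) / θ x = x
    rw [he, Real.log_exp]
    field_simp
  -- continuity of θ at l
  have hcont : ContinuousAt θ l := by
    rw [ContinuousAt, tendsto_order]
    constructor
    · intro a ha
      by_cases ha0 : a ≤ 0
      · filter_upwards [eventually_gt_nhds hl] with x hx
        exact lt_of_le_of_lt ha0 (hθ x hx).1.1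
      · push_neg at ha0
        have haI : a ∈ Set.Ioo (0:ℝ) 1 := ⟨ha0, ha.trans hθ1⟩
        have hga : gfun a < l := by
          have := gfun_strictMono haI ⟨hθ0, hθ1⟩ ha
          rwa [hginv l hl] at this
        filter_upwards [eventually_gt_nhds hga, eventually_gt_nhds hl] with x h1x h2x
        have hxm := (hθ x h2x).1
        refine (gfun_strictMono.lt_iff_lt haI ⟨hxm.1, hxm.2⟩).mp ?_
        rw [hginv x h2x]; exact h1x
    · intro b hb
      by_cases hb1 : 1 ≤ b
      · filter_upwards [eventually_gt_nhds hl] with x hx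
        exact lt_of_lt_of_le (hθ x hx).1.2 hb1
      · push_neg at hb1
        have hbI : b ∈ Set.Ioo (0:ℝ) 1 := ⟨hθ0.trans hb, hb1⟩
        have hgb : l < gfun b := by
          have := gfun_strictMono ⟨hθ0, hθ1⟩ hbI hb
          rwa [hginv l hl] at this
        filter_upwards [eventually_lt_nhds hgb, eventually_gt_nhds hl] with x h1x h2x
        have hxm := (hθ x h2x).1
        refine (gfun_strictMono.lt_iff_lt ⟨hxm.1, hxm.2⟩ hbI).mp ?_
        rw [hginv x h2x]; exact h1x
    -- derivative of gfun at θ l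
  have hlg : Real.log (1 - θ l) = -(l * θ l) := by rw [hθe, Real.log_exp]
  have hgd : HasDerivAt gfun ((1 - d l) / (θ l * (1 - θ l))) (θ l) := by
    have h := gfun_hasDerivAt hθ0 hθ1
    convert h using 1
    rw [hlg, hkey]
    field_simp
    ring
  have hne : (1 - d l) / (θ l * (1 - θ l)) ≠ 0 := by positivity
  have hinv : HasDerivAt θ ((1 - d l) / (θ l * (1 - θ l)))⁻¹ l := by
    refine HasDerivAt.of_local_left_inverse hcont hgd hne ?_
    filter_upwards [eventually_gt_nhds hl] with x hx using hginv x hx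
  constructor
  · convert hinv using 1
    rw [inv_div]
  · have hθne : θ l ≠ 0 := ne_of_gt hθ0
    have hlne : l ≠ 0 := ne_of_gt hl0
    have h2 : (1:ℝ) - d l ≠ 0 := ne_of_gt hdl1
    field_simp
    rw [hkey]; ring
end

section
/- For every real λ with 0 < λ ≤ 1, the sum over all integers m ≥ 1 of exp(−λ·m)·(λ·m)^{m−1}/m! equals 1. -/
open Real Filter Finset
open scoped Topology NNReal ENNReal

noncomputable section BorelAux

/-- Coefficients of the tree function `T(x) = ∑ m^{m-1}/m! xᵐ`. -/
def bq (m : ℕ) : ℝ := if m = 0 then 0 else (m : ℝ) ^ (m - 1) / (Nat.factorial m)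

lemma bq_nonneg (m : ℕ) : 0 ≤ bq m := by
  unfold bq; split <;> positivity

lemma bq_le (m : ℕ) (hm : m ≠ 0) : bq m ≤ Real.exp 1 ^ m / m := by
  have hm0 : (0:ℝ) < m := by exact_mod_cast Nat.pos_of_ne_zero hm
  rw [bq, if_neg hm]
  have h1 : (m:ℝ) ^ m / (Nat.factorial m) ≤ Real.exp m :=
    Real.pow_div_factorial_le_exp (m:ℝ) hm0.le m
  have h2 : (m:ℝ) ^ m = (m:ℝ) ^ (m-1) * m := by
    rw [← pow_succ, Nat.sub_add_cancel (Nat.one_le_iff_ne_zero.mpr hm)]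
  rw [Real.exp_one_pow]
  rw [h2] at h1
  have hf : (0:ℝ) < (Nat.factorial m : ℝ) := by positivity
  rw [div_le_div_iff₀ hf hm0]
  rw [div_le_iff₀ hf] at h1
  nlinarith

lemma bq_le_exp (m : ℕ) : bq m ≤ Real.exp 1 ^ m := by
  rcases eq_or_ne m 0 with rfl | hm
  · simp [bq]
  · refine (bq_le m hm).trans ?_
    have hm1 : (1:ℝ) ≤ m := by exact_mod_cast Nat.one_le_iff_ne_zero.mpr hm
    rw [div_le_iff₀ (by linarith)]
    nlinarith [pow_pos (Real.exp_pos 1) m]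

lemma bq_abs_le (m : ℕ) : |bq m| * ((Real.exp 1)⁻¹) ^ m ≤ 1 := by
  rcases eq_or_ne m 0 with rfl | hm
  · simp [bq]
  · rw [abs_of_nonneg (bq_nonneg m)]
    have h1 : bq m ≤ Real.exp 1 ^ m / m := bq_le m hm
    have hm1 : (1:ℝ) ≤ m := by exact_mod_cast Nat.one_le_iff_ne_zero.mpr hm
    have he : (0:ℝ) < Real.exp 1 ^ m := by positivity
    calc bq m * ((Real.exp 1)⁻¹) ^ m ≤ (Real.exp 1 ^ m / m) * ((Real.exp 1)⁻¹) ^ m := by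
          apply mul_le_mul_of_nonneg_right h1 (by positivity)
      _ = 1 / m := by rw [inv_pow]; field_simp
      _ ≤ 1 := by rw [div_le_one (by linarith)]; exact hm1

lemma bq_summable {x : ℝ} (hx : |x| < (Real.exp 1)⁻¹) :
    Summable fun m : ℕ => bq m * x ^ m := by
  have he : (0:ℝ) < Real.exp 1 := Real.exp_pos 1
  apply Summable.of_norm_bounded (g := fun m => (Real.exp 1 * |x|) ^ m)
  · apply summable_geometric_of_lt_one (by positivity)
    calc Real.exp 1 * |x| < Real.exp 1 * (Real.exp 1)⁻¹ := by
          exact mul_lt_mul_of_pos_left hx he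
      _ = 1 := mul_inv_cancel₀ he.ne'
  · intro m
    rw [norm_mul, norm_pow, Real.norm_eq_abs, Real.norm_eq_abs, mul_pow]
    have h1 : |bq m| ≤ Real.exp 1 ^ m := by
      rw [abs_of_nonneg (bq_nonneg m)]; exact bq_le_exp m
    exact mul_le_mul_of_nonneg_right h1 (by positivity)

/-- The tree power series. -/
def bp : FormalMultilinearSeries ℝ ℝ ℝ := FormalMultilinearSeries.ofScalars ℝ bq

/-- The tree function, as the sum of its power series. -/
def bT : ℝ → ℝ := FormalMultilinearSeries.ofScalarsSum bq

lemma bT_eq (x : ℝ) : bT x = ∑' m : ℕ, bq m * x ^ m := by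
  simpa [bT, smul_eq_mul] using FormalMultilinearSeries.ofScalars_sum_eq bq x

lemma bp_radius : ENNReal.ofReal ((Real.exp 1)⁻¹) ≤ bp.radius := by
  have he : (0:ℝ) < (Real.exp 1)⁻¹ := by positivity
  rw [ENNReal.ofReal]
  apply bp.le_radius_of_bound 1
  intro n
  have hn : ‖bp n‖ = |bq n| := by
    exact (FormalMultilinearSeries.ofScalars_norm ℝ bq n).trans (Real.norm_eq_abs _)
  rw [Real.coe_toNNReal _ he.le, hn]
  exact bq_abs_le n

lemma bT_analyticAt {x : ℝ} (hx : |x| < (Real.exp 1)⁻¹) : AnalyticAt ℝ bT x := by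
  have h0 : 0 < bp.radius := lt_of_lt_of_le (by positivity) bp_radius
  have hb : HasFPowerSeriesOnBall bT bp 0 bp.radius := bp.hasFPowerSeriesOnBall h0
  apply hb.analyticAt_of_mem
  rw [EMetric.mem_ball, edist_dist]
  refine lt_of_lt_of_le ?_ bp_radius
  rw [dist_zero_right, Real.norm_eq_abs]
  exact ENNReal.ofReal_lt_ofReal_iff_of_nonneg (abs_nonneg x) |>.mpr hx

/-- `φ l = l e^{-l}`. -/
def bphi (l : ℝ) : ℝ := l * Real.exp (-l)

lemma bphi_analyticAt (l : ℝ) : AnalyticAt ℝ bphi l := by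
  unfold bphi
  exact (analyticAt_id).mul ((analyticAt_rexp).comp (analyticAt_id.neg))

lemma bphi_lt (l : ℝ) (h0 : 0 < l) (h1 : l < 1) : bphi l < (Real.exp 1)⁻¹ := by
  have h2 : l < Real.exp (l - 1) := by
    have := Real.add_one_lt_exp (x := l - 1) (by intro h; exact absurd (by linarith : l = 1) h1.ne)
    linarith
  unfold bphi
  rw [← Real.exp_neg]
  calc l * Real.exp (-l) < Real.exp (l-1) * Real.exp (-l) := by
        apply mul_lt_mul_of_pos_right h2 (Real.exp_pos _)
    _ = Real.exp (-1) := by rw [← Real.exp_add]; ring_nf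

lemma bphi_nonneg (l : ℝ) (h0 : 0 ≤ l) : 0 ≤ bphi l := by
  have := Real.exp_nonneg (-l); unfold bphi; positivity

/- Finite differences of polynomials of low degree vanish. -/
lemma fd_pow_eq_zero {j n : ℕ} (h : j < n) :
    (fwdDiff (1:ℕ))^[n] (fun x : ℕ => (x : ℝ) ^ j) = fun _ => 0 := by
  induction j using Nat.strong_induction_on generalizing n with
  | _ j IH =>
    obtain ⟨k, rfl⟩ : ∃ k, n = k + 1 := ⟨n - 1, by omega⟩
    rw [Function.iterate_succ_apply]
    have hstep : fwdDiff (1:ℕ) (fun x : ℕ => (x : ℝ) ^ j)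
        = ∑ i ∈ range j, ((j.choose i : ℝ)) • (fun x : ℕ => (x : ℝ) ^ i) := by
      funext x
      simp only [fwdDiff, Finset.sum_apply, Pi.smul_apply, smul_eq_mul]
      push_cast
      rw [add_pow]
      rw [Finset.sum_range_succ]
      simp [mul_comm]
    rw [hstep, fwdDiff_iter_finset_sum]
    funext x
    simp only [Finset.sum_apply, Pi.zero_apply]
    apply Finset.sum_eq_zero
    intro i hi
    rw [fwdDiff_iter_const_smul]
    have : i < j := Finset.mem_range.mp hi
    rw [IH i this (by omega)]
    simp

/-- The key combinatorial identity: the `n`-th finite difference of `x^{n-1}` vanishes. -/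
lemma alt_sum_choose_pow {n : ℕ} (hn : 2 ≤ n) :
    ∑ m ∈ range (n + 1), (-1 : ℝ) ^ (n - m) * (n.choose m) * (m : ℝ) ^ (n - 1) = 0 := by
  have h := fwdDiff_iter_eq_sum_shift (1:ℕ) (fun x : ℕ => (x : ℝ) ^ (n-1)) n 0
  rw [fd_pow_eq_zero (by omega)] at h
  have h2 : (0:ℝ) = ∑ k ∈ range (n+1), ((-1:ℤ)^(n-k) * n.choose k) • ((k:ℝ))^(n-1) := by
    simpa using h
  rw [h2]
  apply Finset.sum_congr rfl
  intro k _
  rw [zsmul_eq_mul]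
  push_cast
  ring

lemma exp_tsum (x : ℝ) : ∑' k : ℕ, x ^ k / (Nat.factorial k) = Real.exp x := by
  rw [Real.exp_eq_exp_ℝ, NormedSpace.exp_eq_tsum_div]

set_option maxHeartbeats 1000000 in
/-- For small `l`, `T(l e^{-l}) = l`, by expanding the double series and
using the finite-difference identity. -/
lemma bT_bphi_small {l : ℝ} (h0 : 0 < l) (h1 : l < 1/5) : bT (bphi l) = l := by
  set a : ℕ × ℕ → ℝ := fun mk => bq mk.1 * l ^ mk.1 * (-(l * mk.1)) ^ mk.2 / (Nat.factorial mk.2)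
    with ha_def
  -- row summability and row sums
  have hrow : ∀ m : ℕ, ∑' k : ℕ, a (m, k) = bq m * bphi l ^ m := by
    intro m
    have : ∀ k, a (m, k) = (bq m * l ^ m) * ((-(l * m)) ^ k / (Nat.factorial k)) := by
      intro k; simp only [ha_def]; ring
    rw [tsum_congr this, tsum_mul_left, exp_tsum]
    unfold bphi
    rw [mul_pow, ← Real.exp_nat_mul]
    ring_nf
  have hrow_summable : ∀ m : ℕ, Summable fun k => a (m, k) := by
    intro m
    have := (Real.summable_pow_div_factorial (-(l * m))).mul_left (bq m * l ^ m)
    apply this.congr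
    intro k; simp only [ha_def]; ring
  -- absolute values
  have habs : ∀ mk : ℕ × ℕ, |a mk| = bq mk.1 * l ^ mk.1 * (l * mk.1) ^ mk.2 / (Nat.factorial mk.2) := by
    intro ⟨m, k⟩
    simp only [ha_def, abs_div, abs_mul, abs_pow, abs_neg, Nat.abs_cast]
    rw [abs_of_nonneg (bq_nonneg m), abs_of_nonneg h0.le]
  have hel : Real.exp l < 1.25 := by
    have h8 : (0.8:ℝ) < Real.exp (-l) := by
      have := Real.add_one_lt_exp (x := -l) (by simpa using h0.ne')
      linarith
    have hinv : Real.exp l * Real.exp (-l) = 1 := by rw [← Real.exp_add]; simp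
    nlinarith [Real.exp_pos l]
  have hgeo : Real.exp 1 * (l * Real.exp l) < 1 := by
    have he1 : Real.exp 1 < 2.7182818286 := Real.exp_one_lt_d9
    have h2 : l * Real.exp l < 0.25 := by nlinarith [Real.exp_pos l]
    nlinarith [mul_pos h0 (Real.exp_pos l), Real.exp_pos 1]
  have habs_summable : Summable fun mk : ℕ × ℕ => |a mk| := by
    rw [summable_prod_of_nonneg (fun mk => abs_nonneg _)]
    constructor
    · intro m; exact (hrow_summable m).abs
    · have hrowabs : ∀ m : ℕ, ∑' k, |a (m, k)| = bq m * (l * Real.exp l) ^ m := by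
        intro m
        have : ∀ k, |a (m, k)| = (bq m * l ^ m) * ((l * m) ^ k / (Nat.factorial k)) := by
          intro k; rw [habs]; ring
        rw [tsum_congr this, tsum_mul_left, exp_tsum, mul_pow, ← Real.exp_nat_mul]
        ring_nf
      apply Summable.congr _ (fun m => (hrowabs m).symm)
      apply Summable.of_norm_bounded (g := fun m => (Real.exp 1 * (l * Real.exp l)) ^ m)
      · exact summable_geometric_of_lt_one (by positivity) hgeo
      · intro m
        rw [Real.norm_eq_abs,
          abs_of_nonneg (mul_nonneg (bq_nonneg m) (by positivity : (0:ℝ) ≤ (l * Real.exp l) ^ m))]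
        calc bq m * (l * Real.exp l) ^ m ≤ Real.exp 1 ^ m * (l * Real.exp l) ^ m :=
              mul_le_mul_of_nonneg_right (bq_le_exp m) (by positivity)
          _ = (Real.exp 1 * (l * Real.exp l)) ^ m := (mul_pow _ _ _).symm
  have hsummable : Summable a := summable_abs_iff.mp habs_summable
  -- first evaluation
  have h1 : ∑' mk : ℕ × ℕ, a mk = bT (bphi l) := by
    rw [Summable.tsum_prod' hsummable hrow_summable, tsum_congr hrow, bT_eq]
  -- antidiagonal sums
  have hdiag : ∀ n : ℕ, ∑ p ∈ Finset.HasAntidiagonal.antidiagonal n, a p = if n = 1 then l else 0 := by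
    intro n
    rw [Finset.Nat.sum_antidiagonal_eq_sum_range_succ_mk]
    rcases n with _ | _ | n
    · simp [ha_def, bq]
    · norm_num [ha_def, bq, Finset.sum_range_succ]
    · rw [if_neg (by omega)]
      show ∑ m ∈ range (n + 2 + 1), a (m, n + 2 - m) = 0
      have hterm : ∀ m ∈ range (n + 2 + 1), a (m, n + 2 - m)
          = (l ^ (n+2) / (Nat.factorial (n+2))) *
            ((-1:ℝ) ^ (n + 2 - m) * ((n+2).choose m) * (m:ℝ) ^ (n + 1)) := by
        intro m hm
        have hmn : m ≤ n + 2 := by have := Finset.mem_range.mp hm; omega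
        rcases eq_or_ne m 0 with rfl | hm0
        · simp [ha_def, bq]
        · have hm1 : 1 ≤ m := Nat.one_le_iff_ne_zero.mpr hm0
          have hfact : ((n+2).choose m : ℝ) * (Nat.factorial m) * (Nat.factorial (n + 2 - m))
              = (Nat.factorial (n+2)) := by
            exact_mod_cast congrArg (Nat.cast : ℕ → ℝ)
              (Nat.choose_mul_factorial_mul_factorial hmn)
          simp only [ha_def, bq, if_neg hm0]
          rw [neg_pow, mul_pow]
          have hpow : (m:ℝ) ^ (m - 1) * (m:ℝ) ^ (n + 2 - m) = (m:ℝ) ^ (n + 1) := by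
            rw [← pow_add]; congr 1; omega
          have hlpow : l ^ m * l ^ (n + 2 - m) = l ^ (n + 2) := by
            rw [← pow_add]; congr 1; omega
          have hf1 : (0:ℝ) < (Nat.factorial m : ℝ) := by positivity
          have hf2 : (0:ℝ) < (Nat.factorial (n + 2 - m) : ℝ) := by positivity
          have hf3 : (0:ℝ) < (Nat.factorial (n + 2) : ℝ) := by positivity
          field_simp
          linear_combination
            ((l^m * l^(n+2-m)) * (Nat.factorial (n+2) : ℝ)) * hpow +
            (((m:ℝ)^(n+1)) * (Nat.factorial (n+2) : ℝ)) * hlpow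
            - ((m:ℝ)^(n+1) * l^(n+2)) * hfact
      have halt : ∑ i ∈ range (n + 2 + 1), (-1:ℝ) ^ (n + 2 - i) * ((n+2).choose i) * (i:ℝ) ^ (n + 1) = 0 := by
        simpa using alt_sum_choose_pow (n := n + 2) (by omega)
      rw [Finset.sum_congr rfl hterm, ← Finset.mul_sum, halt, mul_zero]
  -- second evaluation
  have h2 : ∑' mk : ℕ × ℕ, a mk = l := by
    rw [← Finset.HasAntidiagonal.sigmaAntidiagonalEquivProd.tsum_eq a]
    have hst := Summable.tsum_sigma'
      (f := fun c : (Σ n : ℕ, Finset.HasAntidiagonal.antidiagonal n) => a (Finset.HasAntidiagonal.sigmaAntidiagonalEquivProd c))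
      (fun n => (hasSum_fintype _).summable)
      (Finset.HasAntidiagonal.sigmaAntidiagonalEquivProd.summable_iff.mpr hsummable)
    rw [hst]
    have hfin : ∀ n : ℕ, ∑' (p : Finset.HasAntidiagonal.antidiagonal n),
        a (Finset.HasAntidiagonal.sigmaAntidiagonalEquivProd ⟨n, p⟩) = if n = 1 then l else 0 := by
      intro n
      rw [tsum_fintype]
      simp only [Finset.HasAntidiagonal.sigmaAntidiagonalEquivProd_apply]
      rw [Finset.sum_coe_sort]
      exact hdiag n
    rw [tsum_congr hfin, tsum_ite_eq]
  rw [← h1, h2]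

/-- `T(l e^{-l}) = l` for all `l ∈ (0,1)`, by analytic continuation. -/
lemma bT_bphi {l : ℝ} (h0 : 0 < l) (h1 : l < 1) : bT (bphi l) = l := by
  have hU : IsPreconnected (Set.Ioo (0:ℝ) 1) := isPreconnected_Ioo
  have hf : AnalyticOnNhd ℝ (fun x => bT (bphi x)) (Set.Ioo (0:ℝ) 1) := by
    intro x hx
    apply (bT_analyticAt _).comp (bphi_analyticAt x)
    rw [abs_of_nonneg (bphi_nonneg x hx.1.le)]
    exact bphi_lt x hx.1 hx.2
  have hg : AnalyticOnNhd ℝ (fun x : ℝ => x) (Set.Ioo (0:ℝ) 1) := fun x _ => analyticAt_id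
  have hmem : (1/10 : ℝ) ∈ Set.Ioo (0:ℝ) 1 := by norm_num
  have hev : (fun x => bT (bphi x)) =ᶠ[𝓝 (1/10 : ℝ)] (fun x : ℝ => x) := by
    filter_upwards [Ioo_mem_nhds (by norm_num : (0:ℝ) < 1/10) (by norm_num : (1/10:ℝ) < 1/5)]
      with x hx
    exact bT_bphi_small hx.1 hx.2
  exact hf.eqOn_of_preconnected_of_eventuallyEq hg hU hmem hev ⟨h0, h1⟩

/-- The boundary case `x = e⁻¹` by monotonicity. -/
lemma bT_boundary : bT ((Real.exp 1)⁻¹) = 1 ∧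
    Summable (fun m : ℕ => bq m * ((Real.exp 1)⁻¹) ^ m) := by
  have hnn : ∀ (x : ℝ), 0 ≤ x → ∀ m : ℕ, 0 ≤ bq m * x ^ m :=
    fun x hx m => mul_nonneg (bq_nonneg m) (pow_nonneg hx m)
  have hepos : (0:ℝ) < (Real.exp 1)⁻¹ := by positivity
  have hpartial : ∀ N : ℕ, ∑ m ∈ range N, bq m * ((Real.exp 1)⁻¹) ^ m ≤ 1 := by
    intro N
    have hcont : ContinuousAt (fun x : ℝ => ∑ m ∈ range N, bq m * (bphi x) ^ m) 1 := by
      apply Continuous.continuousAt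
      have hc : Continuous bphi := by unfold bphi; continuity
      continuity
    have htend : Tendsto (fun x : ℝ => ∑ m ∈ range N, bq m * (bphi x) ^ m)
        (𝓝[<] (1:ℝ)) (𝓝 (∑ m ∈ range N, bq m * ((Real.exp 1)⁻¹) ^ m)) := by
      have : bphi 1 = (Real.exp 1)⁻¹ := by unfold bphi; rw [Real.exp_neg]; simp
      simpa [this] using hcont.tendsto.mono_left nhdsWithin_le_nhds
    refine le_of_tendsto htend ?_
    filter_upwards [Ioo_mem_nhdsLT_of_mem (by norm_num : (1:ℝ) ∈ Set.Ioc (0:ℝ) 1)] with x hx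
    have hsum : Summable fun m : ℕ => bq m * (bphi x) ^ m := by
      apply bq_summable
      rw [abs_of_nonneg (bphi_nonneg x hx.1.le)]
      exact bphi_lt x hx.1 hx.2
    calc ∑ m ∈ range N, bq m * (bphi x) ^ m
        ≤ ∑' m : ℕ, bq m * (bphi x) ^ m :=
          Summable.sum_le_tsum (range N) (fun m _ => hnn _ (bphi_nonneg x hx.1.le) m) hsum
      _ = x := by rw [← bT_eq]; exact bT_bphi hx.1 hx.2
      _ ≤ 1 := hx.2.le
  have hsummable : Summable (fun m : ℕ => bq m * ((Real.exp 1)⁻¹) ^ m) :=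
    summable_of_sum_range_le (hnn _ hepos.le) hpartial
  have hle : bT ((Real.exp 1)⁻¹) ≤ 1 := by
    rw [bT_eq]; exact tsum_le_of_sum_range_le (hnn _ hepos.le) hpartial
  have hge : 1 ≤ bT ((Real.exp 1)⁻¹) := by
    by_contra hcon
    push_neg at hcon
    set t := bT ((Real.exp 1)⁻¹) with ht
    have ht0 : 0 ≤ t := by
      rw [ht, bT_eq]; exact tsum_nonneg (hnn _ hepos.le)
    obtain ⟨x, hx1, hx2⟩ : ∃ x : ℝ, t < x ∧ x < 1 := ⟨(t+1)/2, by linarith, by linarith⟩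
    have hx0 : 0 < x := by linarith
    have : x ≤ t := by
      rw [ht, bT_eq]
      have hb := bT_bphi hx0 hx2
      rw [bT_eq] at hb
      rw [← hb]
      apply Summable.tsum_le_tsum _ (by
        apply bq_summable
        rw [abs_of_nonneg (bphi_nonneg x hx0.le)]
        exact bphi_lt x hx0 hx2) hsummable
      intro m
      apply mul_le_mul_of_nonneg_left _ (bq_nonneg m)
      exact pow_le_pow_left₀ (bphi_nonneg x hx0.le) ((bphi_lt x hx0 hx2).le) m
    linarith
  exact ⟨le_antisymm hle hge, hsummable⟩

end BorelAux

/-- For `0 < λ ≤ 1`, the Borel(λ) weights sum to one: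
`∑_{m ≥ 1} exp(−λm)·(λm)^{m−1}/m! = 1`. -/
theorem borel_pmf_tsum_eq_one (l : ℝ) (hl0 : 0 < l) (hl1 : l ≤ 1) :
    ∑' m : ℕ+, Real.exp (-(l * (m : ℕ))) * (l * (m : ℕ)) ^ ((m : ℕ) - 1)
        / (Nat.factorial (m : ℕ)) = 1 := by
  have hb1 : bphi 1 = (Real.exp 1)⁻¹ := by unfold bphi; rw [Real.exp_neg]; simp
  have hkey : bT (bphi l) = l ∧ Summable (fun m : ℕ => bq m * (bphi l) ^ m) := by
    rcases eq_or_lt_of_le hl1 with rfl | hlt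
    · rw [hb1]
      exact ⟨by rw [bT_boundary.1], bT_boundary.2⟩
    · refine ⟨bT_bphi hl0 hlt, bq_summable ?_⟩
      rw [abs_of_nonneg (bphi_nonneg l hl0.le)]
      exact bphi_lt l hl0 hlt
  have hterm : ∀ m : ℕ+, Real.exp (-(l * (m : ℕ))) * (l * (m : ℕ)) ^ ((m : ℕ) - 1)
      / (Nat.factorial (m : ℕ)) = (bq (m : ℕ) * (bphi l) ^ (m : ℕ)) / l := by
    intro m
    have hm1 : 1 ≤ (m : ℕ) := m.one_le
    have hm0 : (m : ℕ) ≠ 0 := by omega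
    have hexp : Real.exp (-l) ^ (m : ℕ) = Real.exp (-(l * (m : ℕ))) := by
      rw [← Real.exp_nat_mul]; ring_nf
    have hlpow : l ^ (m : ℕ) = l ^ ((m : ℕ) - 1) * l := by
      rw [← pow_succ, Nat.sub_add_cancel hm1]
    rw [bq, if_neg hm0]
    unfold bphi
    rw [mul_pow, mul_pow, hexp, hlpow]
    have hf : (0:ℝ) < (Nat.factorial (m : ℕ) : ℝ) := by positivity
    field_simp
  rw [tsum_congr hterm, tsum_div_const]
  have hsub : ∑' m : ℕ+, bq (m : ℕ) * (bphi l) ^ (m : ℕ)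
      = ∑' n : ℕ, bq n * (bphi l) ^ n := by
    rw [← Equiv.pnatEquivNat.symm.tsum_eq (fun m : ℕ+ => bq (m : ℕ) * (bphi l) ^ (m : ℕ))]
    rw [Summable.tsum_eq_zero_add hkey.2]
    simp [bq, Equiv.pnatEquivNat]
  rw [hsub, ← bT_eq, hkey.1, div_self hl0.ne']
end

section
/- For every real λ > 1, the sum over all integers m ≥ 1 of exp(−λ·m)·(λ·m)^{m−1}/(m−1)! equals λ*/(λ·(1 − λ*)), which equals θ′(λ)/θ(λ); consequently, m ↦ (θ(λ)/θ′(λ))·exp(−λ·m)·(λ·m)^{m−1}/(m−1)! is a probability mass function on the positive integers. -/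
open Finset Real Filter Topology

noncomputable def Bsum (n : ℕ) (x y : ℝ) : ℝ :=
  ∑ k ∈ Finset.range (n+1), (n.choose k : ℝ) * (x + k) ^ k * (y + ((n - k : ℕ) : ℝ)) ^ (n - k)

lemma hasDerivAt_Bline (n : ℕ) (x y : ℝ) (t : ℝ) :
    HasDerivAt (fun t => Bsum (n+1) (x+t) (y-t))
      ((↑n+1) * Bsum n (x+t+1) (y-t) - (↑n+1) * Bsum n (x+t) (y-t+1)) t := by
  have H : HasDerivAt (fun t => Bsum (n+1) (x+t) (y-t))
      (∑ k ∈ Finset.range (n+1+1),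
        ((((n+1).choose k : ℝ) * (↑k * ((x+t) + (k:ℝ))^(k-1) * 1)) * ((y-t) + ((n+1-k : ℕ) : ℝ))^(n+1-k)
          + (((n+1).choose k : ℝ) * ((x+t) + (k:ℝ))^k) *
            (((n+1-k : ℕ) : ℝ) * ((y-t) + ((n+1-k : ℕ) : ℝ))^(n+1-k-1) * (-1)))) t := by
    unfold Bsum
    apply HasDerivAt.fun_sum
    intro k _
    have h1 : HasDerivAt (fun t : ℝ => (x+t) + (k : ℝ)) 1 t := by
      simpa using (((hasDerivAt_id t).const_add x).add_const (k : ℝ))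
    have h2 : HasDerivAt (fun t : ℝ => (y-t) + ((n+1-k : ℕ) : ℝ)) (-1) t := by
      exact (((hasDerivAt_id t).const_sub y).add_const ((n+1-k : ℕ) : ℝ))
    exact ((h1.pow k).const_mul ((n+1).choose k : ℝ)).mul (h2.pow (n+1-k))
  have hsum : (∑ k ∈ Finset.range (n+1+1),
        ((((n+1).choose k : ℝ) * (↑k * ((x+t) + (k:ℝ))^(k-1) * 1)) * ((y-t) + ((n+1-k : ℕ) : ℝ))^(n+1-k)
          + (((n+1).choose k : ℝ) * ((x+t) + (k:ℝ))^k) *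
            (((n+1-k : ℕ) : ℝ) * ((y-t) + ((n+1-k : ℕ) : ℝ))^(n+1-k-1) * (-1))))
      = (↑n+1) * Bsum n (x+t+1) (y-t) - (↑n+1) * Bsum n (x+t) (y-t+1) := by
    rw [Finset.sum_add_distrib]
    congr 1
    · -- first sum
      rw [Finset.sum_range_succ']
      simp only [Nat.cast_zero, zero_mul, mul_zero, mul_one, zero_add, add_zero]
      rw [Bsum, Finset.mul_sum]
      simp only [Nat.add_sub_add_right]
      apply Finset.sum_congr rfl
      intro j hj
      have hcast : ((n:ℝ)+1) * (n.choose j : ℝ) = ((n+1).choose (j+1) : ℝ) * ((j:ℝ)+1) := by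
        exact_mod_cast Nat.add_one_mul_choose_eq n j
      push_cast
      linear_combination (((x + t) + ((j:ℝ)+1))^j * ((y - t) + ((n-j:ℕ):ℝ))^(n-j)) * hcast.symm
    · -- second sum
      rw [Finset.sum_range_succ]
      simp only [Nat.sub_self, Nat.cast_zero, zero_mul, mul_zero, add_zero]
      rw [Bsum, Finset.mul_sum, ← Finset.sum_neg_distrib]
      apply Finset.sum_congr rfl
      intro k hk
      have hk' : k ≤ n := by simpa [Nat.lt_succ_iff] using hk
      have hn : n + 1 - k = (n - k) + 1 := by omega
      rw [hn]
      simp only [Nat.add_sub_cancel]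
      have hcast : ((n+1).choose k : ℝ) * (((n-k:ℕ):ℝ)+1) = (n.choose k : ℝ) * ((n:ℝ)+1) := by
        have h := Nat.choose_mul_succ_eq n k
        rw [hn] at h
        exact_mod_cast h.symm
      push_cast
      linear_combination (-(((x + t) + (k:ℝ))^k * ((y - t) + (((n-k:ℕ):ℝ)+1))^(n-k)) *
        (((y-t) + (((n-k:ℕ):ℝ)+1))^0)) * hcast
  rw [← hsum]
  exact H

lemma Bsum_const (n : ℕ) : ∀ x y : ℝ, Bsum n x y = Bsum n 0 (x + y) := by
  induction n with
  | zero => intro x y; simp [Bsum]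
  | succ n ih =>
    intro x y
    have hderiv : ∀ t : ℝ, HasDerivAt (fun t => Bsum (n+1) (x+t) (y-t)) 0 t := by
      intro t
      have h := hasDerivAt_Bline n x y t
      have : (↑n+1 : ℝ) * Bsum n (x+t+1) (y-t) - (↑n+1) * Bsum n (x+t) (y-t+1) = 0 := by
        rw [ih (x+t+1) (y-t), ih (x+t) (y-t+1)]
        ring_nf
      rwa [this] at h
    have hconst : (fun t => Bsum (n+1) (x+t) (y-t)) 0 = (fun t => Bsum (n+1) (x+t) (y-t)) (-x) :=
      is_const_of_deriv_eq_zero (fun t => (hderiv t).differentiableAt)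
        (fun t => (hderiv t).deriv) 0 (-x)
    simpa [add_comm y x] using hconst

lemma Bsum_zero_succ (n : ℕ) (z : ℝ) :
    Bsum (n+1) 0 z = (z + (↑n+1))^(n+1) + (↑n+1) * Bsum n 1 z := by
  rw [Bsum, Finset.sum_range_succ']
  simp only [Nat.cast_zero, add_zero, Nat.sub_zero, Nat.choose_zero_right, Nat.cast_one, one_mul,
    zero_add, pow_zero, Nat.add_sub_add_right]
  rw [Bsum, Finset.mul_sum]
  rw [add_comm]
  congr 1
  · push_cast; ring
  · apply Finset.sum_congr rfl
    intro j hj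
    have hcast : ((n:ℝ)+1) * (n.choose j : ℝ) = ((n+1).choose (j+1) : ℝ) * ((j:ℝ)+1) := by
      exact_mod_cast Nat.add_one_mul_choose_eq n j
    push_cast
    linear_combination (((j:ℝ)+1)^j * (z + ((n-j:ℕ):ℝ))^(n-j)) * hcast.symm

lemma abel1 (N : ℕ) : ∀ y : ℝ,
    ∑ j ∈ Finset.range (N+1), ((N+1).choose (j+1) : ℝ) * ((j:ℝ)+1)^j * (y + ((N-j : ℕ):ℝ))^(N-j)
      = ((N:ℝ)+1) * (y + ((N:ℝ)+1))^N := by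
  induction N with
  | zero => intro y; simp
  | succ N ih =>
    intro y
    have pascal : ∀ j, ((N+2).choose (j+1) : ℝ) = ((N+1).choose j : ℝ) + ((N+1).choose (j+1) : ℝ) := by
      intro j
      exact_mod_cast congrArg (fun m : ℕ => (m:ℝ)) (Nat.choose_succ_succ (N+1) j)
    have hsplit : ∑ j ∈ Finset.range (N+2), ((N+2).choose (j+1) : ℝ) * ((j:ℝ)+1)^j *
          (y + ((N+1-j : ℕ):ℝ))^(N+1-j)
        = (∑ j ∈ Finset.range (N+2), ((N+1).choose j : ℝ) * ((j:ℝ)+1)^j *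
            (y + ((N+1-j : ℕ):ℝ))^(N+1-j))
          + (∑ j ∈ Finset.range (N+2), ((N+1).choose (j+1) : ℝ) * ((j:ℝ)+1)^j *
            (y + ((N+1-j : ℕ):ℝ))^(N+1-j)) := by
      rw [← Finset.sum_add_distrib]
      apply Finset.sum_congr rfl
      intro j _
      rw [pascal j]; ring
    have hS2 : (∑ j ∈ Finset.range (N+2), ((N+1).choose j : ℝ) * ((j:ℝ)+1)^j *
          (y + ((N+1-j : ℕ):ℝ))^(N+1-j)) = Bsum (N+1) 1 y := by
      rw [Bsum]
      apply Finset.sum_congr rfl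
      intro j _
      ring
    have hS1 : (∑ j ∈ Finset.range (N+2), ((N+1).choose (j+1) : ℝ) * ((j:ℝ)+1)^j *
          (y + ((N+1-j : ℕ):ℝ))^(N+1-j))
        = ((N:ℝ)+1) * (y + ((N:ℝ)+2))^(N+1) - ((N:ℝ)+1) * Bsum N 1 (y+1) := by
      rw [Finset.sum_range_succ]
      simp only [Nat.choose_succ_self, Nat.cast_zero, zero_mul, add_zero]
      have hterm : ∀ j ∈ Finset.range (N+1),
          ((N+1).choose (j+1) : ℝ) * ((j:ℝ)+1)^j * (y + ((N+1-j : ℕ):ℝ))^(N+1-j)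
          = (((N+1).choose (j+1) : ℝ) * ((j:ℝ)+1)^j * ((y+1) + ((N-j : ℕ):ℝ))^(N-j)) * (y+((N:ℝ)+2))
            - (((N+1).choose (j+1) : ℝ) * ((j:ℝ)+1)^(j+1) * ((y+1) + ((N-j : ℕ):ℝ))^(N-j)) := by
        intro j hj
        have hj' : j ≤ N := by simpa [Nat.lt_succ_iff] using hj
        have hn : N + 1 - j = (N - j) + 1 := by omega
        rw [hn, pow_succ]
        push_cast [Nat.cast_sub hj']
        ring
      rw [Finset.sum_congr rfl hterm, Finset.sum_sub_distrib, ← Finset.sum_mul]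
      rw [ih (y+1)]
      have hsecond : ∑ j ∈ Finset.range (N+1),
          ((N+1).choose (j+1) : ℝ) * ((j:ℝ)+1)^(j+1) * ((y+1) + ((N-j : ℕ):ℝ))^(N-j)
          = ((N:ℝ)+1) * Bsum N 1 (y+1) := by
        rw [Bsum, Finset.mul_sum]
        apply Finset.sum_congr rfl
        intro j _
        have hcast : ((N:ℝ)+1) * (N.choose j : ℝ) = ((N+1).choose (j+1) : ℝ) * ((j:ℝ)+1) := by
          exact_mod_cast Nat.add_one_mul_choose_eq N j
        rw [pow_succ]
        linear_combination (((j:ℝ)+1)^j * ((y+1) + ((N-j:ℕ):ℝ))^(N-j)) * hcast.symm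
      rw [hsecond]
      ring
    rw [hsplit, hS2, hS1, Bsum_const (N+1) 1 y, Bsum_zero_succ N (1+y),
      Bsum_const N 1 (1+y), Bsum_const N 1 (y+1)]
    have e1 : (1:ℝ)+(1+y) = y+2 := by ring
    have e2 : (1:ℝ)+(y+1) = y+2 := by ring
    rw [e1, e2]
    push_cast
    ring

lemma abel_star (M : ℕ) :
    ∑ j ∈ Finset.range M, ((M+1).choose (j+1) : ℝ) * ((j:ℝ)+1)^j * ((M-j : ℕ):ℝ)^(M-j)
      = ((M:ℝ)+1)^(M+1) - ((M:ℝ)+1)^M := by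
  have h := abel1 M 0
  rw [Finset.sum_range_succ] at h
  simp only [Nat.sub_self, Nat.cast_zero, add_zero, pow_zero, mul_one, Nat.choose_self,
    Nat.cast_one, one_mul, zero_add] at h
  have h2 : ∑ j ∈ Finset.range M, ((M+1).choose (j+1) : ℝ) * ((j:ℝ)+1)^j * ((M-j : ℕ):ℝ)^(M-j)
      = ((M:ℝ)+1) * ((M:ℝ)+1)^M - ((M:ℝ)+1)^M := by
    linarith [h, pow_succ ((M:ℝ)+1) M]
  rw [h2]; ring

noncomputable def bt (μ : ℝ) (n : ℕ) : ℝ :=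
  if n = 0 then 0 else (n:ℝ)^(n-1) * (μ * Real.exp (-μ))^n / (Nat.factorial n)

lemma bt_nonneg {μ : ℝ} (hμ : 0 ≤ μ) (n : ℕ) : 0 ≤ bt μ n := by
  unfold bt
  split
  · exact le_refl 0
  · positivity

lemma bt_le {μ : ℝ} (hμ : 0 ≤ μ) (n : ℕ) : bt μ n ≤ (μ * Real.exp (1-μ))^n := by
  unfold bt
  split
  · rename_i h; subst h; norm_num
  · rename_i hn
    have hn1 : 1 ≤ n := Nat.one_le_iff_ne_zero.mpr hn
    have hX : (0:ℝ) ≤ μ * Real.exp (-μ) := by positivity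
    have h1 : (n:ℝ)^(n-1) ≤ (n:ℝ)^n := by
      apply pow_le_pow_right₀ _ (Nat.sub_le n 1)
      exact_mod_cast hn1
    have h2 : (n:ℝ)^n / (Nat.factorial n : ℝ) ≤ Real.exp 1 ^ n := by
      have := Real.pow_div_factorial_le_exp (x := (n:ℝ)) (by positivity) n
      calc (n:ℝ)^n / (Nat.factorial n : ℝ) ≤ Real.exp (n:ℝ) := this
        _ = Real.exp 1 ^ n := by
            rw [← Real.exp_nat_mul]; norm_num
    have hfac : (0:ℝ) < (Nat.factorial n : ℝ) := by exact_mod_cast Nat.factorial_pos n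
    calc (n:ℝ)^(n-1) * (μ * Real.exp (-μ))^n / (Nat.factorial n : ℝ)
        ≤ (n:ℝ)^n * (μ * Real.exp (-μ))^n / (Nat.factorial n : ℝ) := by
          have hXn : (0:ℝ) ≤ (μ * Real.exp (-μ))^n := pow_nonneg hX n
          apply div_le_div_of_nonneg_right _ hfac.le
          exact mul_le_mul_of_nonneg_right h1 hXn
      _ = ((n:ℝ)^n / (Nat.factorial n : ℝ)) * (μ * Real.exp (-μ))^n := by ring
      _ ≤ Real.exp 1 ^ n * (μ * Real.exp (-μ))^n :=
          mul_le_mul_of_nonneg_right h2 (pow_nonneg hX n)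
      _ = (μ * Real.exp (1-μ))^n := by
          rw [← mul_pow]
          congr 1
          rw [show (1:ℝ) - μ = 1 + -μ by ring, Real.exp_add]
          ring

lemma r_lt_one {μ : ℝ} (h0 : 0 < μ) (h1 : μ < 1) : μ * Real.exp (1-μ) < 1 := by
  have h := Real.add_one_lt_exp (x := μ - 1) (by intro h; linarith [h])
  have h2 : μ < Real.exp (μ - 1) := by linarith
  have h3 : μ * Real.exp (1-μ) < Real.exp (μ-1) * Real.exp (1-μ) := by
    have := Real.exp_pos (1-μ)
    nlinarith
  calc μ * Real.exp (1-μ) < Real.exp (μ-1) * Real.exp (1-μ) := h3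
    _ = 1 := by rw [← Real.exp_add]; norm_num

lemma r_nonneg {μ : ℝ} (h0 : 0 ≤ μ) : 0 ≤ μ * Real.exp (1-μ) := by positivity

lemma summable_bt {μ : ℝ} (h0 : 0 < μ) (h1 : μ < 1) : Summable (bt μ) :=
  Summable.of_nonneg_of_le (bt_nonneg h0.le) (bt_le h0.le)
    (summable_geometric_of_lt_one (r_nonneg h0.le) (r_lt_one h0 h1))

lemma summable_n_bt {μ : ℝ} (h0 : 0 < μ) (h1 : μ < 1) :
    Summable (fun n : ℕ => (n:ℝ) * bt μ n) := by
  have hgeo : Summable (fun n : ℕ => (n:ℝ)^1 * (μ * Real.exp (1-μ))^n) :=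
    summable_pow_mul_geometric_of_norm_lt_one 1
      (by rw [Real.norm_eq_abs, abs_of_nonneg (r_nonneg h0.le)]; exact r_lt_one h0 h1)
  apply Summable.of_nonneg_of_le _ _ hgeo
  · intro n
    have h := bt_nonneg h0.le n
    have hn : (0:ℝ) ≤ (n:ℕ) := Nat.cast_nonneg n
    exact mul_nonneg hn h
  · intro n
    have := bt_le h0.le n
    have hn : (0:ℝ) ≤ n := Nat.cast_nonneg n
    calc (n:ℝ) * bt μ n ≤ (n:ℝ) * (μ * Real.exp (1-μ))^n := by
          have := bt_nonneg h0.le n; nlinarith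
      _ = (n:ℝ)^1 * (μ * Real.exp (1-μ))^n := by ring

lemma bt_conv {μ : ℝ} (h0 : 0 < μ) (h1 : μ < 1) :
    (∑' n : ℕ, (n:ℝ) * bt μ n)
      = (∑' n : ℕ, bt μ n) + (∑' n : ℕ, bt μ n) * (∑' n : ℕ, (n:ℝ) * bt μ n) := by
  have hf : Summable (fun n : ℕ => ‖bt μ n‖) := by
    have := summable_bt h0 h1
    simpa [Real.norm_eq_abs, abs_of_nonneg (bt_nonneg h0.le _)] using this
  have hg : Summable (fun n : ℕ => ‖(n:ℝ) * bt μ n‖) := by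
    have hs := summable_n_bt h0 h1
    have hnn : ∀ n : ℕ, 0 ≤ (n:ℝ) * bt μ n :=
      fun n => mul_nonneg (Nat.cast_nonneg n) (bt_nonneg h0.le n)
    have heq : (fun n : ℕ => ‖(n:ℝ) * bt μ n‖) = fun n : ℕ => (n:ℝ) * bt μ n :=
      funext fun n => by rw [Real.norm_eq_abs, abs_of_nonneg (hnn n)]
    rw [heq]; exact hs
  have hcp := tsum_mul_tsum_eq_tsum_sum_range_of_summable_norm hf hg
  have key : ∀ n : ℕ, (∑ k ∈ Finset.range (n+1), bt μ k * (((n-k : ℕ):ℝ) * bt μ (n-k)))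
      = (n:ℝ) * bt μ n - bt μ n := by
    intro n
    match n with
    | 0 => simp [bt]
    | (M+1) =>
      rw [Finset.sum_range_succ']
      have hbt0 : bt μ 0 = 0 := by simp [bt]
      rw [hbt0]
      simp only [zero_mul, add_zero]
      rw [Finset.sum_range_succ]
      simp only [Nat.add_sub_add_right, Nat.sub_self, Nat.cast_zero, zero_mul, mul_zero, add_zero]
      have hbtzero : bt μ (M - M) = bt μ 0 := by rw [Nat.sub_self]
      set X : ℝ := μ * Real.exp (-μ) with hX
      have hterm : ∀ i ∈ Finset.range M,
          bt μ (i+1) * (((M-i : ℕ):ℝ) * bt μ (M-i))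
          = (((M+1).choose (i+1) : ℝ) * ((i:ℝ)+1)^i * ((M-i : ℕ):ℝ)^(M-i)) *
              (X^(M+1) / ((M+1).factorial : ℝ)) := by
        intro i hi
        have hi' : i < M := Finset.mem_range.mp hi
        have hMi : M - i ≠ 0 := by omega
        have hMi1 : M - i = (M - i - 1) + 1 := by omega
        have e1 : bt μ (i+1) = ((i:ℝ)+1)^i * X^(i+1) / ((i+1).factorial : ℝ) := by
          rw [bt, if_neg (Nat.succ_ne_zero i)]
          simp only [Nat.add_sub_cancel]
          push_cast
          ring
        have e2 : ((M-i : ℕ):ℝ) * bt μ (M-i)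
            = ((M-i:ℕ):ℝ)^(M-i) * X^(M-i) / ((M-i).factorial : ℝ) := by
          rw [bt, if_neg hMi]
          rw [show (M-i) - 1 = M - i - 1 from rfl]
          rw [hMi1]
          simp only [Nat.add_sub_cancel]
          push_cast
          ring
        rw [e1, e2]
        have hfact : ((M+1).choose (i+1) : ℝ) * ((i+1).factorial : ℝ) * ((M-i).factorial : ℝ)
            = ((M+1).factorial : ℝ) := by
          have h := Nat.choose_mul_factorial_mul_factorial (show i+1 ≤ M+1 by omega)
          have h2 : M + 1 - (i+1) = M - i := by omega
          rw [h2] at h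
          exact_mod_cast h
        have hf1 : ((i+1).factorial : ℝ) ≠ 0 := by exact_mod_cast (i+1).factorial_ne_zero
        have hf2 : ((M-i).factorial : ℝ) ≠ 0 := by exact_mod_cast (M-i).factorial_ne_zero
        have hf3 : ((M+1).factorial : ℝ) ≠ 0 := by exact_mod_cast (M+1).factorial_ne_zero
        have hXpow : X^(i+1) * X^(M-i) = X^(M+1) := by
          rw [← pow_add]
          congr 1
          omega
        have hC : ((M+1).choose (i+1) : ℝ) ≠ 0 := by
          have := Nat.choose_pos (show i+1 ≤ M+1 by omega)
          positivity
        rw [← hXpow, ← hfact]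
        field_simp
      rw [Finset.sum_congr rfl hterm, ← Finset.sum_mul, abel_star M]
      have hbtM : bt μ (M+1) = ((M:ℝ)+1)^M * X^(M+1) / ((M+1).factorial : ℝ) := by
        rw [bt, if_neg (Nat.succ_ne_zero M)]
        simp only [Nat.add_sub_cancel]
        push_cast
        ring
      rw [hbtM]
      push_cast
      ring
  have hsum_eq : (∑' n : ℕ, (∑ k ∈ Finset.range (n+1), bt μ k * (((n-k : ℕ):ℝ) * bt μ (n-k))))
      = (∑' n : ℕ, (n:ℝ) * bt μ n) - (∑' n : ℕ, bt μ n) := by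
    rw [tsum_congr key]
    exact Summable.tsum_sub (summable_n_bt h0 h1) (summable_bt h0 h1)
  rw [hsum_eq] at hcp
  linarith [hcp]

noncomputable def bt' (n : ℕ) (μ : ℝ) : ℝ :=
  if n = 0 then 0 else
    (n:ℝ)^(n-1) * ((n:ℝ) * (μ * Real.exp (-μ))^(n-1) * (Real.exp (-μ) * (1-μ))) /
      (Nat.factorial n : ℝ)

lemma hasDerivAt_inner (μ : ℝ) :
    HasDerivAt (fun μ : ℝ => μ * Real.exp (-μ)) (Real.exp (-μ) * (1-μ)) μ := by
  have hE : HasDerivAt (fun μ : ℝ => Real.exp (-μ)) (Real.exp (-μ) * (-1)) μ :=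
    (hasDerivAt_neg μ).exp
  have := (hasDerivAt_id μ).mul hE
  exact this.congr_deriv (by show 1 * Real.exp (-μ) + μ * (Real.exp (-μ) * (-1)) = _; ring)

lemma hasDerivAt_bt (n : ℕ) (μ : ℝ) : HasDerivAt (fun μ => bt μ n) (bt' n μ) μ := by
  rcases eq_or_ne n 0 with h | h
  · subst h
    have : (fun μ : ℝ => bt μ 0) = fun _ => (0:ℝ) := funext fun ν => by simp [bt]
    rw [this, bt']
    simpa using hasDerivAt_const μ (0:ℝ)
  · have hfun : (fun μ : ℝ => bt μ n)
        = fun μ : ℝ => (n:ℝ)^(n-1) * (μ * Real.exp (-μ))^n / (Nat.factorial n : ℝ) :=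
      funext fun ν => by rw [bt, if_neg h]
    rw [hfun, bt', if_neg h]
    have hpow := (hasDerivAt_inner μ).pow n
    have := (hpow.const_mul ((n:ℝ)^(n-1))).div_const (Nat.factorial n : ℝ)
    exact this

lemma texp_mono {s t : ℝ} (hs : 0 ≤ s) (hst : s ≤ t) (ht : t ≤ 1) :
    s * Real.exp (-s) ≤ t * Real.exp (-t) := by
  have hmono : MonotoneOn (fun x : ℝ => x * Real.exp (-x)) (Set.Icc 0 1) := by
    apply monotoneOn_of_deriv_nonneg (convex_Icc 0 1)
    · exact (continuous_id.mul (Real.continuous_exp.comp continuous_neg)).continuousOn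
    · intro x hx
      exact (hasDerivAt_inner x).differentiableAt.differentiableWithinAt
    · intro x hx
      rw [interior_Icc] at hx
      rw [(hasDerivAt_inner x).deriv]
      have := Real.exp_pos (-x)
      nlinarith [hx.1, hx.2]
  exact hmono ⟨hs, hst.trans ht⟩ ⟨hs.trans hst, ht⟩ hst

lemma bt'_bound {b : ℝ} (hb0 : 0 < b) (hb1 : b ≤ 1) (n : ℕ) {μ : ℝ}
    (hμ : μ ∈ Set.Ioo 0 b) :
    ‖bt' n μ‖ ≤ Real.exp 1 * (b * Real.exp (1-b))^(n-1) := by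
  obtain ⟨hμ0, hμb⟩ := hμ
  rcases eq_or_ne n 0 with h | h
  · subst h
    simp [bt']
    positivity
  · have hn1 : 1 ≤ n := Nat.one_le_iff_ne_zero.mpr h
    rw [bt', if_neg h]
    have hμ1 : μ ≤ 1 := le_trans hμb.le hb1
    have hXb : μ * Real.exp (-μ) ≤ b * Real.exp (-b) := texp_mono hμ0.le hμb.le hb1
    have hX0 : (0:ℝ) ≤ μ * Real.exp (-μ) := by positivity
    have hfac : (0:ℝ) < (Nat.factorial n : ℝ) := by exact_mod_cast Nat.factorial_pos n
    have hder : (0:ℝ) ≤ Real.exp (-μ) * (1-μ) := by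
      have := Real.exp_pos (-μ)
      nlinarith
    have habs : ‖(n:ℝ)^(n-1) * ((n:ℝ) * (μ * Real.exp (-μ))^(n-1) * (Real.exp (-μ) * (1-μ))) /
        (Nat.factorial n : ℝ)‖
        = (n:ℝ)^(n-1) * ((n:ℝ) * (μ * Real.exp (-μ))^(n-1) * (Real.exp (-μ) * (1-μ))) /
        (Nat.factorial n : ℝ) := by
      rw [Real.norm_eq_abs, abs_of_nonneg]
      positivity
    rw [habs]
    have hder1 : Real.exp (-μ) * (1-μ) ≤ 1 := by
      have h2 : Real.exp (-μ) ≤ 1 := by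
        rw [Real.exp_le_one_iff]
        linarith
      nlinarith [Real.exp_pos (-μ)]
    have hXpow : (μ * Real.exp (-μ))^(n-1) ≤ (b * Real.exp (-b))^(n-1) :=
      pow_le_pow_left₀ hX0 hXb (n-1)
    have step1 : (n:ℝ)^(n-1) * ((n:ℝ) * (μ * Real.exp (-μ))^(n-1) * (Real.exp (-μ) * (1-μ))) /
        (Nat.factorial n : ℝ)
        ≤ (n:ℝ)^n / (Nat.factorial n : ℝ) * (b * Real.exp (-b))^(n-1) := by
      have hnn : (n:ℝ)^(n-1) * (n:ℝ) = (n:ℝ)^n := by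
        rw [← pow_succ]
        congr 1
        omega
      have hb0' : (0:ℝ) ≤ (b * Real.exp (-b))^(n-1) := by positivity
      have hnpos : (0:ℝ) ≤ (n:ℝ)^(n-1) * (n:ℝ) := by positivity
      calc (n:ℝ)^(n-1) * ((n:ℝ) * (μ * Real.exp (-μ))^(n-1) * (Real.exp (-μ) * (1-μ))) /
          (Nat.factorial n : ℝ)
          ≤ (n:ℝ)^(n-1) * ((n:ℝ) * (b * Real.exp (-b))^(n-1) * 1) / (Nat.factorial n : ℝ) := by
            apply div_le_div_of_nonneg_right _ hfac.le
            have h3 : (μ * Real.exp (-μ))^(n-1) * (Real.exp (-μ) * (1-μ))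
                ≤ (b * Real.exp (-b))^(n-1) * 1 := by
              apply mul_le_mul hXpow hder1 hder hb0'
            calc (n:ℝ)^(n-1) * ((n:ℝ) * (μ * Real.exp (-μ))^(n-1) * (Real.exp (-μ) * (1-μ)))
                = ((n:ℝ)^(n-1) * (n:ℝ)) * ((μ * Real.exp (-μ))^(n-1) * (Real.exp (-μ) * (1-μ))) := by
                  ring
              _ ≤ ((n:ℝ)^(n-1) * (n:ℝ)) * ((b * Real.exp (-b))^(n-1) * 1) :=
                  mul_le_mul_of_nonneg_left h3 hnpos
              _ = (n:ℝ)^(n-1) * ((n:ℝ) * (b * Real.exp (-b))^(n-1) * 1) := by ring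
        _ = ((n:ℝ)^(n-1) * (n:ℝ)) / (Nat.factorial n : ℝ) * (b * Real.exp (-b))^(n-1) := by
            ring
        _ = (n:ℝ)^n / (Nat.factorial n : ℝ) * (b * Real.exp (-b))^(n-1) := by rw [hnn]
    have step2 : (n:ℝ)^n / (Nat.factorial n : ℝ) ≤ Real.exp 1 ^ n := by
      have := Real.pow_div_factorial_le_exp (x := (n:ℝ)) (by positivity) n
      calc (n:ℝ)^n / (Nat.factorial n : ℝ) ≤ Real.exp (n:ℝ) := this
        _ = Real.exp 1 ^ n := by rw [← Real.exp_nat_mul]; norm_num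
    have hb' : (0:ℝ) ≤ (b * Real.exp (-b))^(n-1) := by positivity
    calc (n:ℝ)^(n-1) * ((n:ℝ) * (μ * Real.exp (-μ))^(n-1) * (Real.exp (-μ) * (1-μ))) /
        (Nat.factorial n : ℝ)
        ≤ (n:ℝ)^n / (Nat.factorial n : ℝ) * (b * Real.exp (-b))^(n-1) := step1
      _ ≤ Real.exp 1 ^ n * (b * Real.exp (-b))^(n-1) := mul_le_mul_of_nonneg_right step2 hb'
      _ = Real.exp 1 * (Real.exp 1 ^ (n-1) * (b * Real.exp (-b))^(n-1)) := by
          have hsplit : Real.exp 1 ^ n = Real.exp 1 ^ (n-1) * Real.exp 1 := by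
            rw [← pow_succ]
            congr 1
            omega
          rw [hsplit]
          ring
      _ = Real.exp 1 * (b * Real.exp (1-b))^(n-1) := by
          rw [← mul_pow]
          congr 2
          rw [show (1:ℝ) - b = 1 + -b by ring, Real.exp_add]
          ring

lemma summable_bound {b : ℝ} (hb0 : 0 < b) (hb1 : b < 1) :
    Summable (fun n : ℕ => Real.exp 1 * (b * Real.exp (1-b))^(n-1)) := by
  set q : ℝ := b * Real.exp (1-b) with hq
  have hq0 : 0 < q := by positivity
  have hq1 : q < 1 := r_lt_one hb0 hb1
  have hgeo : Summable (fun n : ℕ => q^n) := summable_geometric_of_lt_one hq0.le hq1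
  have : Summable (fun n : ℕ => (1/q) * q^n) := hgeo.mul_left _
  apply Summable.of_nonneg_of_le (fun n => by positivity) _ (this.mul_left (Real.exp 1))
  intro n
  have hqn : q^(n-1) ≤ (1/q) * q^n := by
    rw [one_div, inv_mul_eq_div, le_div_iff₀ hq0, ← pow_succ]
    exact pow_le_pow_of_le_one hq0.le hq1.le (by omega)
  calc Real.exp 1 * q^(n-1) ≤ Real.exp 1 * ((1/q) * q^n) := by
        apply mul_le_mul_of_nonneg_left hqn (Real.exp_pos 1).le
    _ = Real.exp 1 * (1/q * q^n) := rfl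

lemma hasDerivAt_Hsum {μ₀ : ℝ} (h0 : 0 < μ₀) (h1 : μ₀ < 1) :
    HasDerivAt (fun μ => ∑' n : ℕ, bt μ n) (∑' n : ℕ, bt' n μ₀) μ₀ := by
  set b : ℝ := (1 + μ₀)/2 with hb
  have hb0 : 0 < b := by rw [hb]; linarith
  have hb1 : b < 1 := by rw [hb]; linarith
  have hμb : μ₀ < b := by rw [hb]; linarith
  apply hasDerivAt_tsum_of_isPreconnected (summable_bound hb0 hb1)
    (isOpen_Ioo (a := (0:ℝ)) (b := b)) (convex_Ioo (0:ℝ) b).isPreconnected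
    (fun n y _ => hasDerivAt_bt n y)
    (fun n y hy => bt'_bound hb0 hb1.le n hy)
    (Set.mem_Ioo.mpr ⟨h0, hμb⟩)
    (summable_bt h0 h1)
    (Set.mem_Ioo.mpr ⟨h0, hμb⟩)

lemma bt'_eq {μ : ℝ} (hμ : μ ≠ 0) (n : ℕ) :
    bt' n μ = (1-μ)/μ * ((n:ℝ) * bt μ n) := by
  rcases eq_or_ne n 0 with h | h
  · subst h; simp [bt', bt]
  · rw [bt', if_neg h, bt, if_neg h]
    have hn : n - 1 + 1 = n := by omega
    have hXsplit : (μ * Real.exp (-μ))^n = (μ * Real.exp (-μ))^(n-1) * (μ * Real.exp (-μ)) := by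
      rw [← pow_succ, hn]
    rw [hXsplit]
    field_simp

lemma hasDerivAt_H {μ₀ : ℝ} (h0 : 0 < μ₀) (h1 : μ₀ < 1) :
    HasDerivAt (fun μ => ∑' n : ℕ, bt μ n)
      ((1-μ₀)/μ₀ * (∑' n : ℕ, (n:ℝ) * bt μ₀ n)) μ₀ := by
  have h := hasDerivAt_Hsum h0 h1
  have : (∑' n : ℕ, bt' n μ₀) = (1-μ₀)/μ₀ * (∑' n : ℕ, (n:ℝ) * bt μ₀ n) := by
    rw [← tsum_mul_left]
    exact tsum_congr (fun n => bt'_eq h0.ne' n)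
  rwa [this] at h

noncomputable def Hf (μ : ℝ) : ℝ := ∑' n : ℕ, bt μ n
noncomputable def Gf (μ : ℝ) : ℝ := ∑' n : ℕ, (n:ℝ) * bt μ n

lemma Gf_conv {μ : ℝ} (h0 : 0 < μ) (h1 : μ < 1) : Gf μ = Hf μ + Hf μ * Gf μ :=
  bt_conv h0 h1

lemma hasDerivAt_psi {μ₀ : ℝ} (h0 : 0 < μ₀) (h1 : μ₀ < 1) :
    HasDerivAt (fun μ => Hf μ * Real.exp (μ - Hf μ) / μ) 0 μ₀ := by
  have hconv := Gf_conv h0 h1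
  set D : ℝ := (1-μ₀)/μ₀ * Gf μ₀ with hD
  have hH : HasDerivAt Hf D μ₀ := hasDerivAt_H h0 h1
  set E : ℝ := Real.exp (μ₀ - Hf μ₀) with hE
  have hExp : HasDerivAt (fun μ => Real.exp (μ - Hf μ)) (E * (1 - D)) μ₀ :=
    ((hasDerivAt_id μ₀).sub hH).exp
  have hNum : HasDerivAt (fun μ => Hf μ * Real.exp (μ - Hf μ))
      (D * E + Hf μ₀ * (E * (1 - D))) μ₀ := hH.mul hExp
  have hQ := hNum.div (hasDerivAt_id μ₀) h0.ne'
  have hval : ((D * E + Hf μ₀ * (E * (1 - D))) * id μ₀ - Hf μ₀ * Real.exp (μ₀ - Hf μ₀) * 1) /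
      (id μ₀)^2 = 0 := by
    simp only [id_eq]
    rw [div_eq_zero_iff]
    left
    have key : D * μ₀ = (1 - μ₀) * Gf μ₀ := by
      rw [hD]; field_simp
    rw [← hE]
    linear_combination (E * (1 - Hf μ₀)) * key + ((1-μ₀) * E) * hconv
  rw [hval] at hQ
  exact hQ

lemma psi_const {μ ν : ℝ} (hμ : μ ∈ Set.Ioo (0:ℝ) 1) (hν : ν ∈ Set.Ioo (0:ℝ) 1) :
    Hf μ * Real.exp (μ - Hf μ) / μ = Hf ν * Real.exp (ν - Hf ν) / ν := by
  set ψ : ℝ → ℝ := fun μ => Hf μ * Real.exp (μ - Hf μ) / μ with hψ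
  have hds : ∀ x ∈ Set.Ioo (0:ℝ) 1, HasDerivAt ψ 0 x := fun x hx =>
    hasDerivAt_psi hx.1 hx.2
  apply (convex_Ioo (0:ℝ) 1).is_const_of_fderivWithin_eq_zero
    (fun x hx => ((hds x hx).differentiableAt).differentiableWithinAt) _ hμ hν
  intro x hx
  have h := ((hds x hx).hasFDerivAt.hasFDerivWithinAt (s := Set.Ioo (0:ℝ) 1)).fderivWithin
    (isOpen_Ioo.uniqueDiffOn x hx)
  rw [h]
  ext y
  simp

lemma bt_one (μ : ℝ) : bt μ 1 = μ * Real.exp (-μ) := by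
  simp [bt, Nat.factorial]

lemma H_tail_bound {μ : ℝ} (h0 : 0 < μ) (h1 : μ < 1) :
    Hf μ - μ * Real.exp (-μ) ≤ (μ * Real.exp (1-μ))^2 / (1 - μ * Real.exp (1-μ))
    ∧ 0 ≤ Hf μ - μ * Real.exp (-μ) := by
  set r : ℝ := μ * Real.exp (1-μ) with hr
  have hr0 : 0 < r := by positivity
  have hr1 : r < 1 := r_lt_one h0 h1
  have hs := summable_bt h0 h1
  have hs1 : Summable (fun n => bt μ (n+1)) := (summable_nat_add_iff 1).mpr hs
  have hs2 : Summable (fun n => bt μ (n+2)) := (summable_nat_add_iff 2).mpr hs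
  have hsplit : Hf μ = μ * Real.exp (-μ) + ∑' n : ℕ, bt μ (n+2) := by
    rw [Hf, Summable.tsum_eq_zero_add hs]
    have h2 : (∑' n : ℕ, bt μ (n+1)) = bt μ 1 + ∑' n : ℕ, bt μ (n+2) := by
      rw [Summable.tsum_eq_zero_add hs1]
    rw [h2, bt_one]
    simp [bt]
  constructor
  · rw [hsplit]
    have htail : (∑' n : ℕ, bt μ (n+2)) ≤ ∑' n : ℕ, r^(n+2) := by
      apply Summable.tsum_le_tsum (fun n => bt_le h0.le (n+2)) hs2
      exact ((summable_geometric_of_lt_one hr0.le hr1).mul_right _).congr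
        (fun n => by rw [pow_add])
    have hgeo : (∑' n : ℕ, r^(n+2)) = r^2 / (1-r) := by
      have : (∑' n : ℕ, r^(n+2)) = (∑' n : ℕ, r^n * r^2) :=
        tsum_congr (fun n => by rw [pow_add])
      rw [this, tsum_mul_right, tsum_geometric_of_lt_one hr0.le hr1, inv_mul_eq_div]
    linarith [htail, hgeo.le, hgeo.ge]
  · rw [hsplit]
    have : 0 ≤ ∑' n : ℕ, bt μ (n+2) := tsum_nonneg (fun n => bt_nonneg h0.le (n+2))
    linarith

lemma psi_eq_one {μ : ℝ} (hμ : μ ∈ Set.Ioo (0:ℝ) 1) :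
    Hf μ * Real.exp (μ - Hf μ) / μ = 1 := by
  set l := nhdsWithin (0:ℝ) (Set.Ioo (0:ℝ) 1) with hl
  have hcl : (0:ℝ) ∈ closure (Set.Ioo (0:ℝ) 1) := by
    rw [closure_Ioo (by norm_num : (0:ℝ) ≠ 1)]
    exact ⟨le_refl 0, zero_le_one⟩
  haveI hne : l.NeBot := mem_closure_iff_nhdsWithin_neBot.mp hcl
  have h_err : ∀ᶠ ν in l, ‖Hf ν / ν - Real.exp (-ν)‖ ≤ 2 * Real.exp 1 ^ 2 * ν := by
    have h1 : ∀ᶠ ν in l, ν ∈ Set.Ioo (0:ℝ) 1 := self_mem_nhdsWithin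
    have h2 : ∀ᶠ ν in l, ν < 1/(2*Real.exp 1) := by
      apply Filter.Eventually.filter_mono nhdsWithin_le_nhds
      exact eventually_lt_nhds (by positivity)
    filter_upwards [h1, h2] with ν hν hν2
    obtain ⟨hν0, hν1⟩ := hν
    obtain ⟨hT, hT0⟩ := H_tail_bound hν0 hν1
    set r : ℝ := ν * Real.exp (1-ν) with hr
    have hr0 : 0 < r := by positivity
    have hre : r ≤ Real.exp 1 * ν := by
      rw [hr, mul_comm]
      apply mul_le_mul_of_nonneg_right _ hν0.le
      exact Real.exp_le_exp.mpr (by linarith)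
    have he1 : (1:ℝ) < Real.exp 1 := by
      have := Real.exp_one_gt_d9; linarith
    have hr12 : r ≤ 1/2 := by
      have h2e : (0:ℝ) < 2*Real.exp 1 := by positivity
      have hlt : ν * (2*Real.exp 1) < 1 := by
        rw [← lt_div_iff₀ h2e]
        exact hν2
      nlinarith [hre]
    have hrq : r^2/(1-r) ≤ 2*r^2 := by
      rw [div_le_iff₀ (by linarith : (0:ℝ) < 1-r)]
      nlinarith
    have hTb : Hf ν - ν * Real.exp (-ν) ≤ 2 * Real.exp 1 ^2 * ν^2 := by
      have : r^2 ≤ (Real.exp 1 * ν)^2 := by nlinarith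
      nlinarith
    have heq : Hf ν / ν - Real.exp (-ν) = (Hf ν - ν * Real.exp (-ν))/ν := by
      field_simp
    rw [heq, Real.norm_eq_abs, abs_of_nonneg (by positivity)]
    rw [div_le_iff₀ hν0]
    nlinarith
  have hexp1 : Filter.Tendsto (fun ν : ℝ => Real.exp (-ν)) l (𝓝 1) := by
    have : Filter.Tendsto (fun ν : ℝ => Real.exp (-ν)) (𝓝 0) (𝓝 1) := by
      have := (Real.continuous_exp.comp continuous_neg).tendsto (0:ℝ)
      simpa [Function.comp_def] using this
    exact this.mono_left nhdsWithin_le_nhds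
  have hz : Filter.Tendsto (fun ν : ℝ => 2 * Real.exp 1 ^ 2 * ν) l (𝓝 0) := by
    have : Filter.Tendsto (fun ν : ℝ => 2 * Real.exp 1 ^ 2 * ν) (𝓝 0) (𝓝 0) := by
      have := (continuous_const.mul continuous_id (f := fun ν : ℝ => 2 * Real.exp 1 ^ 2)).tendsto (0:ℝ)
      simpa [Pi.mul_def] using this
    exact this.mono_left nhdsWithin_le_nhds
  have h2 : Filter.Tendsto (fun ν => Hf ν / ν - Real.exp (-ν)) l (𝓝 0) :=
    squeeze_zero_norm' h_err hz
  have hquot : Filter.Tendsto (fun ν => Hf ν / ν) l (𝓝 1) := by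
    have := h2.add hexp1
    simpa using this
  have hH0 : Filter.Tendsto Hf l (𝓝 0) := by
    have hid : Filter.Tendsto (fun ν : ℝ => ν) l (𝓝 0) :=
      tendsto_id.mono_left nhdsWithin_le_nhds
    have := hquot.mul hid
    rw [mul_zero (1:ℝ)] at this
    apply this.congr'
    filter_upwards [self_mem_nhdsWithin] with ν hν
    rw [div_mul_cancel₀ _ hν.1.ne']
  have hexp2 : Filter.Tendsto (fun ν => Real.exp (ν - Hf ν)) l (𝓝 1) := by
    have hsub : Filter.Tendsto (fun ν => ν - Hf ν) l (𝓝 0) := by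
      have hid : Filter.Tendsto (fun ν : ℝ => ν) l (𝓝 0) :=
        tendsto_id.mono_left nhdsWithin_le_nhds
      simpa using hid.sub hH0
    have := (Real.continuous_exp.tendsto (0:ℝ)).comp hsub
    simpa [Function.comp_def] using this
  have hψ : Filter.Tendsto (fun ν => Hf ν * Real.exp (ν - Hf ν) / ν) l (𝓝 1) := by
    have := hquot.mul hexp2
    rw [mul_one (1:ℝ)] at this
    apply this.congr
    intro ν
    ring
  have hconst : Filter.Tendsto (fun ν => Hf ν * Real.exp (ν - Hf ν) / ν) l
      (𝓝 (Hf μ * Real.exp (μ - Hf μ) / μ)) := by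
    apply Filter.Tendsto.congr' _ tendsto_const_nhds
    filter_upwards [self_mem_nhdsWithin] with ν hν
    exact psi_const hμ hν
  exact tendsto_nhds_unique hconst hψ

lemma H_fixed {μ : ℝ} (hμ : μ ∈ Set.Ioo (0:ℝ) 1) :
    Hf μ * Real.exp (-(Hf μ)) = μ * Real.exp (-μ) := by
  have h := psi_eq_one hμ
  have hμ0 : μ ≠ 0 := hμ.1.ne'
  rw [div_eq_one_iff_eq hμ0] at h
  calc Hf μ * Real.exp (-(Hf μ)) = Hf μ * Real.exp (μ - Hf μ) * Real.exp (-μ) := by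
        rw [mul_assoc, ← Real.exp_add]
        congr 2
        ring
    _ = μ * Real.exp (-μ) := by rw [h]

lemma texp_lt {μ : ℝ} (h0 : 0 < μ) (h1 : μ < 1) :
    μ * Real.exp (-μ) < Real.exp (-(1:ℝ)) := by
  have h := r_lt_one h0 h1
  have he : Real.exp (1-μ) * Real.exp (-(1:ℝ)) = Real.exp (-μ) := by
    rw [← Real.exp_add]; congr 1; ring
  have hp := Real.exp_pos (-(1:ℝ))
  nlinarith [Real.exp_pos (1-μ)]

lemma H_ne_one {μ : ℝ} (hμ : μ ∈ Set.Ioo (0:ℝ) 1) : Hf μ ≠ 1 := by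
  intro h
  have hfix := H_fixed hμ
  rw [h] at hfix
  have := texp_lt hμ.1 hμ.2
  rw [one_mul] at hfix
  linarith [this, hfix.le, hfix.ge]

lemma H_small_lt_one {μ : ℝ} (h0 : 0 < μ) (hsm : μ ≤ 1/(2*Real.exp 1)) : Hf μ < 1 := by
  have he1 : (2:ℝ) < Real.exp 1 := by
    have := Real.exp_one_gt_d9; linarith
  have h1 : μ < 1 := by
    have : 1/(2*Real.exp 1) < 1 := by
      rw [div_lt_one (by positivity)]
      linarith
    linarith
  obtain ⟨hT, hT0⟩ := H_tail_bound h0 h1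
  set r : ℝ := μ * Real.exp (1-μ) with hr
  have hr0 : 0 < r := by positivity
  have hre : r ≤ Real.exp 1 * μ := by
    rw [hr, mul_comm]
    apply mul_le_mul_of_nonneg_right _ h0.le
    exact Real.exp_le_exp.mpr (by linarith)
  have heμ : Real.exp 1 * μ ≤ 1/2 := by
    rw [le_div_iff₀ (by norm_num : (0:ℝ) < 2)]
    calc Real.exp 1 * μ * 2 = μ * (2 * Real.exp 1) := by ring
      _ ≤ (1/(2*Real.exp 1)) * (2*Real.exp 1) := by
          apply mul_le_mul_of_nonneg_right hsm (by positivity)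
      _ = 1 := by field_simp
  have hr12 : r ≤ 1/2 := le_trans hre heμ
  have hrq : r^2/(1-r) ≤ 2*r^2 := by
    rw [div_le_iff₀ (by linarith : (0:ℝ) < 1-r)]
    nlinarith
  have hexp : Real.exp (-μ) ≤ 1 := by
    rw [Real.exp_le_one_iff]; linarith
  have hμ4 : μ ≤ 1/4 := by
    calc μ ≤ 1/(2*Real.exp 1) := hsm
      _ ≤ 1/4 := by
        rw [div_le_div_iff₀ (by positivity) (by norm_num)]
        linarith
  -- Hf μ ≤ μ * exp(-μ) + 2 r² ≤ 1/4 + 2·(1/2)·r ≤ 1/4 + r ≤ 1/4 + 1/2 < 1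
  have : Hf μ ≤ μ + 2*r^2 := by nlinarith
  nlinarith

lemma H_lt_one {μ : ℝ} (hμ : μ ∈ Set.Ioo (0:ℝ) 1) : Hf μ < 1 := by
  obtain ⟨h0, h1⟩ := hμ
  by_contra hcon
  push_neg at hcon
  have hgt : 1 < Hf μ := lt_of_le_of_ne hcon (Ne.symm (H_ne_one ⟨h0, h1⟩))
  set a : ℝ := 1/(2*Real.exp 1) with ha
  have ha0 : 0 < a := by positivity
  have ha1 : a < 1 := by
    rw [ha, div_lt_one (by positivity)]
    have := Real.exp_one_gt_d9; linarith
  rcases le_or_gt μ a with hc | hc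
  · exact absurd (H_small_lt_one h0 hc) (by linarith)
  · have hC : ContinuousOn Hf (Set.Icc a μ) := by
      intro x hx
      have hx0 : 0 < x := lt_of_lt_of_le ha0 hx.1
      have hx1 : x < 1 := lt_of_le_of_lt hx.2 h1
      exact (hasDerivAt_H hx0 hx1).continuousAt.continuousWithinAt
    have hIVT := intermediate_value_Icc hc.le hC
    have h1mem : (1:ℝ) ∈ Set.Icc (Hf a) (Hf μ) :=
      ⟨(H_small_lt_one ha0 (le_refl a)).le, hgt.le⟩
    obtain ⟨c, hc1, hc2⟩ := hIVT h1mem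
    have hcmem : c ∈ Set.Ioo (0:ℝ) 1 :=
      ⟨lt_of_lt_of_le ha0 hc1.1, lt_of_le_of_lt hc1.2 h1⟩
    exact H_ne_one hcmem hc2

lemma H_eq_self {μ : ℝ} (hμ : μ ∈ Set.Ioo (0:ℝ) 1) : Hf μ = μ := by
  have hsm : StrictMonoOn (fun t : ℝ => t * Real.exp (-t)) (Set.Icc 0 1) := by
    apply strictMonoOn_of_deriv_pos (convex_Icc 0 1)
    · exact (continuous_id.mul (Real.continuous_exp.comp continuous_neg)).continuousOn
    · intro x hx
      rw [interior_Icc] at hx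
      rw [(hasDerivAt_inner x).deriv]
      have := Real.exp_pos (-x)
      nlinarith [hx.1, hx.2]
  have hH0 : 0 ≤ Hf μ := tsum_nonneg (fun n => bt_nonneg hμ.1.le n)
  exact hsm.injOn ⟨hH0, (H_lt_one hμ).le⟩ ⟨hμ.1.le, hμ.2.le⟩ (H_fixed hμ)

lemma G_eq {μ : ℝ} (hμ : μ ∈ Set.Ioo (0:ℝ) 1) : Gf μ = μ / (1-μ) := by
  have hconv := Gf_conv hμ.1 hμ.2
  rw [H_eq_self hμ] at hconv
  have h1 : (1:ℝ) - μ ≠ 0 := by have := hμ.2; intro h; linarith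
  field_simp
  linarith [hconv]

lemma texp_strictMono : StrictMonoOn (fun t : ℝ => t * Real.exp (-t)) (Set.Icc 0 1) := by
  apply strictMonoOn_of_deriv_pos (convex_Icc 0 1)
  · exact (continuous_id.mul (Real.continuous_exp.comp continuous_neg)).continuousOn
  · intro x hx
    rw [interior_Icc] at hx
    rw [(hasDerivAt_inner x).deriv]
    have := Real.exp_pos (-x)
    nlinarith [hx.1, hx.2]

lemma texp_strictAnti : StrictAntiOn (fun t : ℝ => t * Real.exp (-t)) (Set.Ici 1) := by
  apply strictAntiOn_of_deriv_neg (convex_Ici 1)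
  · exact (continuous_id.mul (Real.continuous_exp.comp continuous_neg)).continuousOn
  · intro x hx
    rw [interior_Ici] at hx
    rw [(hasDerivAt_inner x).deriv]
    have := Real.exp_pos (-x)
    have : (1:ℝ) < x := hx
    nlinarith [Real.exp_pos (-x)]

lemma term_eq {l μ : ℝ} (hl : 1 < l) (hfix : l * Real.exp (-l) = μ * Real.exp (-μ))
    (n : ℕ) (hn : n ≠ 0) :
    Real.exp (-(l * n)) * (l * n)^(n-1) / (Nat.factorial (n-1) : ℝ)
      = (1/l) * ((n:ℝ) * bt μ n) := by
  obtain ⟨k, rfl⟩ : ∃ k, n = k+1 := ⟨n-1, by omega⟩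
  have hl0 : l ≠ 0 := by intro h; rw [h] at hl; linarith
  rw [bt, if_neg (Nat.succ_ne_zero k), ← hfix]
  simp only [Nat.add_sub_cancel]
  have he : Real.exp (-(l * ((k+1 : ℕ):ℝ))) = Real.exp (-l)^(k+1) := by
    rw [← Real.exp_nat_mul]
    congr 1
    push_cast
    ring
  rw [he]
  have hmp1 : (l * ((k+1:ℕ):ℝ))^k = l^k * ((k+1:ℕ):ℝ)^k := mul_pow l _ k
  have hmp2 : (l * Real.exp (-l))^(k+1) = l^(k+1) * Real.exp (-l)^(k+1) := mul_pow _ _ _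
  rw [hmp1, hmp2]
  have hfs : ((k+1).factorial : ℝ) = ((k+1:ℕ):ℝ) * (k.factorial : ℝ) := by
    rw [Nat.factorial_succ]; push_cast; ring
  rw [hfs]
  have hk : (k.factorial : ℝ) ≠ 0 := by exact_mod_cast k.factorial_ne_zero
  have hk1 : ((k+1:ℕ):ℝ) ≠ 0 := by positivity
  field_simp
  ring

/-- For `λ > 1`,
`∑_{m ≥ 1} exp(−λm)·(λm)^{m−1}/(m−1)! = λ*/(λ(1 − λ*)) = θ′(λ)/θ(λ)`,
and consequently `m ↦ (θ(λ)/θ′(λ))·exp(−λm)·(λm)^{m−1}/(m−1)!` is a probability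
mass function on the positive integers (the law of the truncated size-biased
Borel–Tanner variable `B_λ`). -/
theorem truncated_size_biased_borel_tanner_pmf
    (θ θ' d : ℝ → ℝ)
    (hθ : ∀ x : ℝ, 1 < x → θ x ∈ Set.Ioo (0 : ℝ) 1 ∧ 1 - θ x = Real.exp (-(x * θ x)))
    (hd : ∀ c : ℝ, 1 < c →
      d c ∈ Set.Ioo (0 : ℝ) 1 ∧ c * Real.exp (-c) = d c * Real.exp (-(d c)))
    (hθ' : ∀ x : ℝ, 1 < x → HasDerivAt θ (θ' x) x) :
    ∀ l : ℝ, 1 < l →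
      (∑' m : ℕ+, Real.exp (-(l * (m : ℕ))) * (l * (m : ℕ)) ^ ((m : ℕ) - 1)
          / (Nat.factorial ((m : ℕ) - 1)) = d l / (l * (1 - d l))) ∧
      d l / (l * (1 - d l)) = θ' l / θ l ∧
      (∀ m : ℕ+, 0 ≤ (θ l / θ' l) * (Real.exp (-(l * (m : ℕ)))
          * (l * (m : ℕ)) ^ ((m : ℕ) - 1) / (Nat.factorial ((m : ℕ) - 1)))) ∧
      ∑' m : ℕ+, (θ l / θ' l) * (Real.exp (-(l * (m : ℕ)))
          * (l * (m : ℕ)) ^ ((m : ℕ) - 1) / (Nat.factorial ((m : ℕ) - 1))) = 1 := by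
  intro l hl
  obtain ⟨hdmem, hdfix⟩ := hd l hl
  set μ : ℝ := d l with hμdef
  have hμ0 : 0 < μ := hdmem.1
  have hμ1 : μ < 1 := hdmem.2
  have hl0 : (0:ℝ) < l := by linarith
  have h1μ : (0:ℝ) < 1 - μ := by linarith
  -- Part 1
  have hpart1 : (∑' m : ℕ+, Real.exp (-(l * (m : ℕ))) * (l * (m : ℕ)) ^ ((m : ℕ) - 1)
      / (Nat.factorial ((m : ℕ) - 1) : ℝ)) = μ / (l * (1 - μ)) := by
    have hterm : ∀ m : ℕ+, Real.exp (-(l * (m : ℕ))) * (l * (m : ℕ)) ^ ((m : ℕ) - 1)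
        / (Nat.factorial ((m : ℕ) - 1) : ℝ) = (1/l) * (((m:ℕ):ℝ) * bt μ (m:ℕ)) :=
      fun m => term_eq hl hdfix (m:ℕ) m.ne_zero
    calc (∑' m : ℕ+, Real.exp (-(l * (m : ℕ))) * (l * (m : ℕ)) ^ ((m : ℕ) - 1)
          / (Nat.factorial ((m : ℕ) - 1) : ℝ))
        = ∑' m : ℕ+, (1/l) * (((m:ℕ):ℝ) * bt μ (m:ℕ)) := tsum_congr hterm
      _ = ∑' n : ℕ, (1/l) * ((((n.succPNat : ℕ+) : ℕ):ℝ) * bt μ ((n.succPNat : ℕ+) : ℕ)) :=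
          (Equiv.pnatEquivNat.symm.tsum_eq
            (fun m : ℕ+ => (1/l) * (((m:ℕ):ℝ) * bt μ (m:ℕ)))).symm
      _ = ∑' n : ℕ, (1/l) * ((((n+1 : ℕ)):ℝ) * bt μ (n+1)) := by
          apply tsum_congr
          intro n
          rfl
      _ = (1/l) * ∑' n : ℕ, (((n+1 : ℕ)):ℝ) * bt μ (n+1) := tsum_mul_left
      _ = (1/l) * Gf μ := by
          congr 1
          have hs := summable_n_bt hμ0 hμ1
          rw [Gf, Summable.tsum_eq_zero_add hs]
          simp
      _ = μ / (l * (1 - μ)) := by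
          rw [G_eq ⟨hμ0, hμ1⟩]
          rw [div_mul_div_comm, one_mul]
  -- Part 2 : the theta derivative identity
  obtain ⟨htmem, hteq⟩ := hθ l hl
  set t : ℝ := θ l with htdef
  have ht0 : 0 < t := htmem.1
  have ht1 : t < 1 := htmem.2
  have hderiv := hθ' l hl
  -- l * (1 - t) = μ
  have hcfix : (l * (1-t)) * Real.exp (-(l * (1-t))) = l * Real.exp (-l) := by
    have h1 : 1 - t = Real.exp (-(l * t)) := hteq
    calc (l * (1-t)) * Real.exp (-(l * (1-t)))
        = l * (Real.exp (-(l*t)) * Real.exp (-(l*(1-t)))) := by rw [← h1]; ring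
      _ = l * Real.exp (-(l*t) + -(l*(1-t))) := by rw [Real.exp_add]
      _ = l * Real.exp (-l) := by congr 1; ring
  have hceq : l * (1 - t) = μ := by
    set c : ℝ := l * (1-t) with hcdef
    have hc0 : 0 < c := by
      apply mul_pos hl0
      linarith
    rcases le_or_gt c 1 with hcle | hcgt
    · apply texp_strictMono.injOn ⟨hc0.le, hcle⟩ ⟨hμ0.le, hμ1.le⟩
      simp only
      rw [hcfix, hdfix]
    · exfalso
      have hcl : c = l := by
        apply texp_strictAnti.injOn (Set.mem_Ici.mpr hcgt.le) (Set.mem_Ici.mpr hl.le)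
        simp only
        rw [hcfix]
      rw [hcdef] at hcl
      have : t = 0 := by
        have hll : l * (1 - t) = l * 1 := by rw [hcl]; ring
        have := mul_left_cancel₀ hl0.ne' hll
        linarith
      linarith
  -- derivative computation
  have hd1 : HasDerivAt (fun x => 1 - θ x) (-(θ' l)) l := by
    exact hderiv.const_sub 1
  have hd2 : HasDerivAt (fun x => Real.exp (-(x * θ x)))
      (Real.exp (-(l * t)) * (-(1 * t + l * θ' l))) l := by
    exact (((hasDerivAt_id l).mul hderiv).neg).exp
  have heveq : (fun x => 1 - θ x) =ᶠ[𝓝 l] (fun x => Real.exp (-(x * θ x))) := by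
    filter_upwards [isOpen_Ioi.mem_nhds (Set.mem_Ioi.mpr hl)] with x hx
    exact (hθ x hx).2
  have hd2' : HasDerivAt (fun x => 1 - θ x) (Real.exp (-(l * t)) * (-(1 * t + l * θ' l))) l :=
    hd2.congr_of_eventuallyEq heveq
  have huniq : -(θ' l) = Real.exp (-(l * t)) * (-(1 * t + l * θ' l)) := hd1.unique hd2'
  rw [← hteq] at huniq
  -- huniq : -(θ' l) = (1 - t) * (-(1 * t + l * θ' l))
  have hθ'val : θ' l * (1 - μ) = t * (1 - t) := by
    have hlt : l * (1-t) = μ := hceq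
    linear_combination (-1) * huniq + θ' l * hlt
  have hθ'pos : 0 < θ' l := by
    have ht1t : 0 < t * (1-t) := mul_pos ht0 (by linarith)
    nlinarith
  have hpart2 : μ / (l * (1 - μ)) = θ' l / θ l := by
    rw [← htdef]
    rw [div_eq_div_iff (by positivity) (by positivity)]
    -- μ * t = θ' l * (l * (1-μ))
    have : μ = l * (1-t) := hceq.symm
    nlinarith [hθ'val]
  refine ⟨hpart1, hpart2, ?_, ?_⟩
  · intro m
    have h1 : 0 ≤ θ l / θ' l := by positivity
    have h2 : (0:ℝ) ≤ l * ((m:ℕ):ℝ) := by positivity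
    have h3 : (0:ℝ) ≤ Real.exp (-(l * (m : ℕ))) * (l * (m : ℕ)) ^ ((m : ℕ) - 1)
        / (Nat.factorial ((m : ℕ) - 1) : ℝ) := by positivity
    exact mul_nonneg h1 h3
  · rw [tsum_mul_left, hpart1, hpart2]
    have hθ0 : θ l ≠ 0 := ht0.ne'
    field_simp
    exact htdef
end

section
/- For every integer m ≥ 1 and every real λ with 0 < λ ≤ 1: exp(−λ·m)·(λ·m)^{m−1}/m! ≤ (3/m^{3/2})·exp(−(m−1)·(1−λ)²/2). -/
open Real

/-- `log l + (1-l) + (1-l)^2/2 ≤ 0` for `0 < l ≤ 1`. -/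
lemma aux_log_bound (l : ℝ) (hl0 : 0 < l) (hl1 : l ≤ 1) :
    Real.log l + (1 - l) + (1 - l) ^ 2 / 2 ≤ 0 := by
  set f : ℝ → ℝ := fun x => Real.log x + (1 - x) + (1 - x) ^ 2 / 2 with hf
  have hmono : MonotoneOn f (Set.Icc l 1) := by
    apply monotoneOn_of_deriv_nonneg (convex_Icc l 1)
    · apply ContinuousOn.add
      apply ContinuousOn.add
      · exact Real.continuousOn_log.mono (fun x hx => by
          simp only [Set.mem_compl_iff, Set.mem_singleton_iff]
          exact ne_of_gt (lt_of_lt_of_le hl0 hx.1))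
      · fun_prop
      · fun_prop
    · intro x hx
      rw [interior_Icc] at hx
      have hx0 : 0 < x := lt_trans hl0 hx.1
      exact (((Real.differentiableAt_log hx0.ne').add
        ((differentiableAt_const (1:ℝ)).sub differentiableAt_id)).add
        ((((differentiableAt_const (1:ℝ)).sub differentiableAt_id).pow 2).div_const 2)).differentiableWithinAt
    · intro x hx
      rw [interior_Icc] at hx
      have hx0 : 0 < x := lt_trans hl0 hx.1
      have hd : HasDerivAt f (x⁻¹ + (0 - 1) + (↑2 * (1 - x) ^ (2-1) * (0 - 1)) / 2) x := by
        exact ((Real.hasDerivAt_log hx0.ne').add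
          ((hasDerivAt_const x (1:ℝ)).sub (hasDerivAt_id x))).add
          ((((hasDerivAt_const x (1:ℝ)).sub (hasDerivAt_id x)).pow 2).div_const 2)
      rw [hd.deriv]
      have h1 : (2 - x) * x ≤ 1 := by nlinarith [sq_nonneg (1 - x)]
      have h2 : 2 - x ≤ x⁻¹ := by
        rw [← mul_le_mul_iff_of_pos_right hx0, inv_mul_cancel₀ hx0.ne']
        exact h1
      norm_num
      linarith
  have := hmono (Set.left_mem_Icc.2 hl1) (Set.right_mem_Icc.2 hl1) hl1
  simpa [hf] using this

/-- `l * exp(1-l) ≤ exp(-(1-l)^2/2)` for `0 < l ≤ 1`. -/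
lemma aux_exp_bound (l : ℝ) (hl0 : 0 < l) (hl1 : l ≤ 1) :
    l * Real.exp (1 - l) ≤ Real.exp (-(1 - l) ^ 2 / 2) := by
  have h := aux_log_bound l hl0 hl1
  calc l * Real.exp (1 - l) = Real.exp (Real.log l + (1 - l)) := by
        rw [Real.exp_add, Real.exp_log hl0]
    _ ≤ Real.exp (-(1 - l) ^ 2 / 2) := Real.exp_le_exp.2 (by linarith)

/-- Stirling lower bound. -/
lemma aux_stirling (n : ℕ) :
    Real.sqrt π * (Real.sqrt (2 * (n + 1)) * (((n:ℝ) + 1) / Real.exp 1) ^ (n + 1))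
      ≤ (Nat.factorial (n + 1) : ℝ) := by
  have h1 : Real.sqrt π ≤ Stirling.stirlingSeq (n + 1) := by
    have ha := Stirling.stirlingSeq'_antitone
    have ht : Filter.Tendsto (Stirling.stirlingSeq ∘ Nat.succ) Filter.atTop (nhds (Real.sqrt π)) :=
      Stirling.tendsto_stirlingSeq_sqrt_pi.comp (Filter.tendsto_add_atTop_nat 1)
    exact ha.le_of_tendsto ht n
  rw [Stirling.stirlingSeq] at h1
  have hpos : 0 < Real.sqrt (2 * ((n:ℝ) + 1)) * (((n:ℝ) + 1) / Real.exp 1) ^ (n + 1) := by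
    positivity
  rw [le_div_iff₀ (by push_cast at hpos ⊢; exact hpos)] at h1
  push_cast at h1 ⊢
  linarith

/-- Gaussian-type upper bound on the Borel(λ) probability mass function: for every
integer `m ≥ 1` and `0 < λ ≤ 1`,
`exp(−λm)(λm)^{m−1}/m! ≤ (3/m^{3/2})·exp(−(m−1)(1−λ)²/2)`. -/
theorem borel_pmf_gaussian_upper_bound (m : ℕ) (hm : 1 ≤ m) (l : ℝ)
    (hl0 : 0 < l) (hl1 : l ≤ 1) :
    Real.exp (-(l * m)) * (l * m) ^ (m - 1) / (Nat.factorial m)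
      ≤ (3 / (m : ℝ) ^ ((3 : ℝ) / 2)) * Real.exp (-((m : ℝ) - 1) * (1 - l) ^ 2 / 2) := by
  obtain ⟨n, rfl⟩ : ∃ n, m = n + 1 := ⟨m - 1, (Nat.succ_pred_eq_of_pos hm).symm⟩
  set N : ℝ := (n : ℝ) + 1 with hN
  have hN1 : (1:ℝ) ≤ N := by rw [hN]; linarith [(Nat.cast_nonneg n : (0:ℝ) ≤ n)]
  have hN0 : (0:ℝ) < N := by positivity
  have hcast : ((n + 1 : ℕ) : ℝ) = N := by push_cast [hN]; ring
  simp only [Nat.add_sub_cancel, hcast]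
  -- rewrite the left side
  have hEQ : Real.exp (-(l * N)) * (l * N) ^ n
      = (l * Real.exp (1 - l)) ^ n * Real.exp (-l) * (N ^ n * Real.exp (-(n:ℝ))) := by
    have e1 : Real.exp (-(l * N)) = Real.exp ((n:ℝ) * (1 - l)) * Real.exp (-l) * Real.exp (-(n:ℝ)) := by
      rw [← Real.exp_add, ← Real.exp_add]; congr 1; rw [hN]; ring
    rw [mul_pow, mul_pow, ← Real.exp_nat_mul, e1]; ring
  rw [hEQ]
  -- Bound B
  have hB : (l * Real.exp (1 - l)) ^ n ≤ Real.exp (-(N - 1) * (1 - l) ^ 2 / 2) := by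
    calc (l * Real.exp (1 - l)) ^ n ≤ (Real.exp (-(1 - l) ^ 2 / 2)) ^ n :=
          pow_le_pow_left₀ (by positivity) (aux_exp_bound l hl0 hl1) n
      _ = Real.exp (-(N - 1) * (1 - l) ^ 2 / 2) := by
          rw [← Real.exp_nat_mul]; congr 1; rw [hN]; ring
  -- Bound C (Stirling)
  have hC : N ^ n * Real.exp (-(n:ℝ)) / (Nat.factorial (n + 1) : ℝ) ≤ 3 / N ^ ((3:ℝ)/2) := by
    have hst := aux_stirling n
    have hrpow : N ^ ((3:ℝ)/2) = N * Real.sqrt N := by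
      rw [show (3:ℝ)/2 = 1 + 1/2 by norm_num, Real.rpow_add hN0, Real.rpow_one,
        ← Real.sqrt_eq_rpow]
    have hfac0 : (0:ℝ) < (Nat.factorial (n + 1) : ℝ) := by
      exact_mod_cast Nat.factorial_pos (n + 1)
    rw [div_le_div_iff₀ hfac0 (by positivity), hrpow]
    -- N^n * exp(-n) * (N * √N) ≤ 3 * (n+1)!
    have hs2 : Real.sqrt (2 * N) = Real.sqrt 2 * Real.sqrt N := Real.sqrt_mul (by norm_num) N
    have hpow : (N / Real.exp 1) ^ (n + 1) = N ^ (n + 1) * Real.exp (-((n:ℝ) + 1)) := by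
      rw [div_pow, ← Real.exp_nat_mul]
      rw [show ((n + 1 : ℕ) : ℝ) * 1 = (n:ℝ) + 1 by push_cast; ring]
      rw [Real.exp_neg]
      ring
    rw [hs2, hpow] at hst
    have hkey : Real.exp 1 ≤ 3 * (Real.sqrt π * Real.sqrt 2) := by
      have h2 : (1.4 : ℝ) ≤ Real.sqrt 2 := by
        rw [show (1.4:ℝ) = Real.sqrt (1.96) by rw [show (1.96:ℝ) = 1.4^2 by norm_num,
          Real.sqrt_sq (by norm_num)]]
        exact Real.sqrt_le_sqrt (by norm_num)
      have hpi : (1.7 : ℝ) ≤ Real.sqrt π := by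
        rw [show (1.7:ℝ) = Real.sqrt (2.89) by rw [show (2.89:ℝ) = 1.7^2 by norm_num,
          Real.sqrt_sq (by norm_num)]]
        exact Real.sqrt_le_sqrt (by linarith [Real.pi_gt_three])
      nlinarith [Real.exp_one_lt_d9, Real.sqrt_nonneg π, Real.sqrt_nonneg 2]
    -- exp(-(n+1)) = exp(-n) * exp(-1)
    have he : Real.exp (-((n:ℝ) + 1)) = Real.exp (-(n:ℝ)) * Real.exp (-1) := by
      rw [← Real.exp_add]; ring_nf
    rw [he] at hst
    -- suffices: N^n exp(-n) N √N ≤ 3 √π (√2 √N N^(n+1) exp(-n) exp(-1))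
    have h3 : N ^ n * Real.exp (-(n:ℝ)) * (N * Real.sqrt N)
        ≤ 3 * (Real.sqrt π * (Real.sqrt 2 * Real.sqrt N * (N ^ (n + 1) * (Real.exp (-(n:ℝ)) * Real.exp (-1))))) := by
      have hNpow : N ^ n * N = N ^ (n + 1) := by rw [pow_succ]
      have hexp1 : Real.exp (-1) = (Real.exp 1)⁻¹ := by rw [← Real.exp_neg]
      rw [hexp1]
      have hepos : (0:ℝ) < Real.exp 1 := Real.exp_pos 1
      have : N ^ n * Real.exp (-(n:ℝ)) * (N * Real.sqrt N)
          = N ^ (n+1) * Real.exp (-(n:ℝ)) * Real.sqrt N := by rw [← hNpow]; ring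
      rw [this]
      rw [show 3 * (Real.sqrt π * (Real.sqrt 2 * Real.sqrt N * (N ^ (n + 1) * (Real.exp (-(n:ℝ)) * (Real.exp 1)⁻¹))))
          = (3 * (Real.sqrt π * Real.sqrt 2) * (Real.exp 1)⁻¹) * (N ^ (n+1) * Real.exp (-(n:ℝ)) * Real.sqrt N) by ring]
      have h1le : (1:ℝ) ≤ 3 * (Real.sqrt π * Real.sqrt 2) * (Real.exp 1)⁻¹ := by
        have h := mul_le_mul_of_nonneg_right hkey (inv_nonneg.2 hepos.le)
        rwa [mul_inv_cancel₀ hepos.ne'] at h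
      nlinarith [h1le, mul_pos (mul_pos (pow_pos hN0 (n+1)) (Real.exp_pos (-(n:ℝ)))) (Real.sqrt_pos.2 hN0)]
    calc N ^ n * Real.exp (-(n:ℝ)) * (N * Real.sqrt N)
        ≤ 3 * (Real.sqrt π * (Real.sqrt 2 * Real.sqrt N * (N ^ (n + 1) * (Real.exp (-(n:ℝ)) * Real.exp (-1))))) := h3
      _ ≤ 3 * (Nat.factorial (n + 1) : ℝ) := by nlinarith [hst]
  -- combine
  have hexpl : Real.exp (-l) ≤ 1 := Real.exp_le_one_iff.2 (by linarith)
  calc (l * Real.exp (1 - l)) ^ n * Real.exp (-l) * (N ^ n * Real.exp (-(n:ℝ))) / (Nat.factorial (n + 1) : ℝ)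
      = ((l * Real.exp (1 - l)) ^ n * Real.exp (-l)) * (N ^ n * Real.exp (-(n:ℝ)) / (Nat.factorial (n + 1) : ℝ)) := by
        ring
    _ ≤ (Real.exp (-(N - 1) * (1 - l) ^ 2 / 2) * 1) * (3 / N ^ ((3:ℝ)/2)) := by
        apply mul_le_mul
        · exact mul_le_mul hB hexpl (by positivity) (by positivity)
        · exact hC
        · positivity
        · positivity
    _ = (3 / N ^ ((3:ℝ)/2)) * Real.exp (-(N - 1) * (1 - l) ^ 2 / 2) := by ring
end

section
/- Let x₁ be the unique point in (1,∞) with θ′(x₁) = 1. Then for every real x with 1 < x ≤ x₁, θ(x) − θ((1+x)/2) ≤ (2/3)·θ(x). -/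
/-- Key log inequality: `-(t/(1-t)) < log (1-t)` for `t ∈ (0,1)`. -/
lemma pgw_aux_logA {t : ℝ} (h0 : 0 < t) (h1 : t < 1) :
    -(t / (1 - t)) < Real.log (1 - t) := by
  have h1t : (0:ℝ) < 1 - t := by linarith
  have hne : (1:ℝ) / (1 - t) ≠ 1 := by
    intro h
    have : (1:ℝ) = 1 - t := by
      field_simp at h
      linarith
    linarith
  have := Real.log_lt_sub_one_of_pos (by positivity : (0:ℝ) < 1 / (1 - t)) hne
  rw [one_div, Real.log_inv] at this
  have heq : (1 - t)⁻¹ - 1 = t / (1 - t) := by field_simp; ring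
  rw [heq] at this
  linarith

/-- Derivative of `g t = -log(1-t)/t` on `(0,1)`. -/
lemma pgw_aux_hasDeriv {t : ℝ} (h0 : 0 < t) (h1 : t < 1) :
    HasDerivAt (fun u => -Real.log (1 - u) / u)
      ((t / (1 - t) + Real.log (1 - t)) / t ^ 2) t := by
  have h1t : (1:ℝ) - t ≠ 0 := by intro h; linarith
  have hinner : HasDerivAt (fun u : ℝ => 1 - u) (-1 : ℝ) t := by
    simpa using (hasDerivAt_id t).const_sub 1
  have hlog : HasDerivAt (fun u => Real.log (1 - u)) ((1 - t)⁻¹ * (-1)) t :=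
    (Real.hasDerivAt_log h1t).comp t hinner
  have hneg : HasDerivAt (fun u => -Real.log (1 - u)) (-((1 - t)⁻¹ * (-1))) t := hlog.neg
  have := hneg.div (hasDerivAt_id t) (by exact ne_of_gt h0)
  refine HasDerivAt.congr_deriv this ?_
  simp only [id]
  field_simp
  ring

/-- `g t = -log(1-t)/t` is strictly monotone on `(0,1)`. -/
lemma pgw_aux_gmono {a b : ℝ} (ha : 0 < a) (hab : a < b) (hb : b < 1) :
    -Real.log (1 - a) / a < -Real.log (1 - b) / b := by
  have hmono : StrictMonoOn (fun u => -Real.log (1 - u) / u) (Set.Ioo (0:ℝ) 1) := by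
    apply strictMonoOn_of_deriv_pos (convex_Ioo 0 1)
    · intro u hu
      obtain ⟨hu0, hu1⟩ := hu
      exact ((pgw_aux_hasDeriv hu0 hu1).differentiableAt).continuousAt.continuousWithinAt
    · intro u hu
      rw [interior_Ioo] at hu
      obtain ⟨hu0, hu1⟩ := hu
      rw [(pgw_aux_hasDeriv hu0 hu1).deriv]
      have := pgw_aux_logA hu0 hu1
      have hnum : 0 < u / (1 - u) + Real.log (1 - u) := by linarith
      positivity
  exact hmono ⟨ha, by linarith⟩ ⟨by linarith, hb⟩ hab

/-- Key inequality: `0 ≤ t + 6 log(1 - t/3) - log(1 - t)` on `(0,1)`. -/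
lemma pgw_aux_hnonneg {t : ℝ} (h0 : 0 < t) (h1 : t < 1) :
    0 ≤ t + 6 * Real.log (1 - t / 3) - Real.log (1 - t) := by
  set h : ℝ → ℝ := fun s => s + 6 * Real.log (1 - s / 3) - Real.log (1 - s) with hh
  have hderiv : ∀ s ∈ Set.Ioo (0:ℝ) t,
      HasDerivAt h (1 - 2 / (1 - s / 3) + 1 / (1 - s)) s := by
    intro s hs
    obtain ⟨hs0, hst⟩ := hs
    have hs1 : s < 1 := lt_of_lt_of_le hst (le_of_lt h1)
    have hA : (0:ℝ) < 1 - s / 3 := by linarith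
    have hB : (0:ℝ) < 1 - s := by linarith
    have hin1 : HasDerivAt (fun u : ℝ => 1 - u / 3) (-(1/3) : ℝ) s := by
      simpa using ((hasDerivAt_id s).div_const 3).const_sub 1
    have hin2 : HasDerivAt (fun u : ℝ => 1 - u) (-1 : ℝ) s := by
      simpa using (hasDerivAt_id s).const_sub 1
    have hl1 : HasDerivAt (fun u => Real.log (1 - u / 3)) ((1 - s/3)⁻¹ * (-(1/3))) s :=
      by have := (Real.hasDerivAt_log hA.ne').comp s hin1; exact this
    have hl2 : HasDerivAt (fun u => Real.log (1 - u)) ((1 - s)⁻¹ * (-1)) s :=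
      by have := (Real.hasDerivAt_log hB.ne').comp s hin2; exact this
    have := ((hasDerivAt_id s).add (hl1.const_mul 6)).sub hl2
    have h3s : (3:ℝ) - s ≠ 0 := by linarith
    refine HasDerivAt.congr_deriv this ?_
    field_simp [hB.ne', h3s]
    ring
  have hmono : MonotoneOn h (Set.Icc (0:ℝ) t) := by
    apply monotoneOn_of_deriv_nonneg (convex_Icc 0 t)
    · apply ContinuousOn.sub
      apply ContinuousOn.add continuousOn_id
      · apply ContinuousOn.mul continuousOn_const
        apply ContinuousOn.log
        · exact (continuousOn_const.sub (continuousOn_id.div_const 3))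
        · intro s hs
          obtain ⟨hs0, hst⟩ := hs
          have : s < 1 := lt_of_le_of_lt hst h1
          intro hc; nlinarith
      · apply ContinuousOn.log (continuousOn_const.sub continuousOn_id)
        intro s hs
        obtain ⟨hs0, hst⟩ := hs
        have : s < 1 := lt_of_le_of_lt hst h1
        intro hc; simp only [Pi.sub_apply, id_eq] at hc; nlinarith
    · intro s hs
      rw [interior_Icc] at hs
      exact ((hderiv s hs).differentiableAt).differentiableWithinAt
    · intro s hs
      rw [interior_Icc] at hs
      rw [(hderiv s hs).deriv]
      obtain ⟨hs0, hst⟩ := hs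
      have hs1 : s < 1 := lt_of_lt_of_le hst (le_of_lt h1)
      have hA : (0:ℝ) < 1 - s / 3 := by linarith
      have hB : (0:ℝ) < 1 - s := by linarith
      have h3s : (3:ℝ) - s ≠ 0 := by linarith
      have key : 1 - 2 / (1 - s / 3) + 1 / (1 - s)
          = (s ^ 2 + s) / (3 * (1 - s / 3) * (1 - s)) := by
        field_simp [hB.ne', h3s]
        ring
      rw [key]
      positivity
  have h0eq : h 0 = 0 := by simp [hh]
  have := hmono (Set.left_mem_Icc.mpr (le_of_lt h0)) (Set.right_mem_Icc.mpr (le_of_lt h0))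
      (le_of_lt h0)
  rw [h0eq] at this
  simpa [hh] using this

/-- Let `x₁` be the unique point of `(1,∞)` with `θ′(x₁) = 1`. Then for all
`1 < x ≤ x₁`, `θ(x) − θ((1+x)/2) ≤ (2/3)·θ(x)`. (This says the conditional
probability `P(X_{n+1} − 1 ≥ (x−1)/2 | X_n = x)` of the forward maximal chain is
at most `2/3`.) -/
theorem pgw_survival_halving_bound
    (θ θ' : ℝ → ℝ)
    (hθ : ∀ x : ℝ, 1 < x → θ x ∈ Set.Ioo (0 : ℝ) 1 ∧ 1 - θ x = Real.exp (-(x * θ x)))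
    (hθ' : ∀ x : ℝ, 1 < x → HasDerivAt θ (θ' x) x)
    (x₁ : ℝ) (hx₁ : 1 < x₁) (hx₁' : θ' x₁ = 1) :
    ∀ x : ℝ, 1 < x → x ≤ x₁ → θ x - θ ((1 + x) / 2) ≤ (2 / 3) * θ x := by
  intro x hx _
  set m : ℝ := (1 + x) / 2 with hmdef
  have hm : 1 < m := by rw [hmdef]; linarith
  obtain ⟨⟨ht0, ht1⟩, htEq⟩ := hθ x hx
  obtain ⟨⟨hs0, hs1⟩, hsEq⟩ := hθ m hm
  set t : ℝ := θ x
  set s : ℝ := θ m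
  -- it suffices to show t/3 ≤ s
  suffices hsuff : t / 3 ≤ s by linarith
  by_contra hcon
  push_neg at hcon
  -- express x and m via g
  have hlogt : Real.log (1 - t) = -(x * t) := by rw [htEq, Real.log_exp]
  have hlogs : Real.log (1 - s) = -(m * s) := by rw [hsEq, Real.log_exp]
  have hgt : -Real.log (1 - t) / t = x := by
    rw [hlogt]; field_simp
  have hgs : -Real.log (1 - s) / s = m := by
    rw [hlogs]; field_simp
  -- strict mono: g s < g (t/3)
  have ht31 : t / 3 < 1 := by linarith
  have hmono : -Real.log (1 - s) / s < -Real.log (1 - t/3) / (t/3) :=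
    pgw_aux_gmono hs0 hcon ht31
  -- key inequality: g (t/3) ≤ (1 + g t)/2
  have hkey : -Real.log (1 - t/3) / (t/3) ≤ (1 + -Real.log (1 - t) / t) / 2 := by
    have hC := pgw_aux_hnonneg ht0 ht1
    rw [div_le_div_iff₀ (by positivity : (0:ℝ) < t/3) (by norm_num : (0:ℝ) < 2)]
    have hexp : (1 + -Real.log (1 - t) / t) * (t / 3)
        = t / 3 - Real.log (1 - t) / 3 := by
      field_simp
      ring
    rw [hexp]
    linarith
  rw [hgs, hgt] at *
  have : m < (1 + x) / 2 := by
    calc m < -Real.log (1 - t/3) / (t/3) := hmono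
    _ ≤ (1 + x) / 2 := by rw [← hgt]; exact hkey
  rw [hmdef] at this
  linarith
end

section
/- For every real ν > 1 and every integer k ≥ 1, n_k(ν) ≤ (1/k!)·(exp(−(ν − ν*))/(1 − ν*))^k; consequently, 1 ≤ ∑_{k=0}^∞ n_k(ν) ≤ exp(exp(−(ν − ν*))/(1 − ν*)). -/
open MeasureTheory Set Filter

private lemma my_integral_exp_neg_mul_Ioi {b : ℝ} (hb : 0 < b) (a : ℝ) :
    ∫ x in Set.Ioi a, Real.exp (-b * x) = Real.exp (-b * a) / b := by
  have hderiv : ∀ x ∈ Set.Ici a, HasDerivAt (fun y => -Real.exp (-b * y) / b)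
      (Real.exp (-b * x)) x := by
    intro x _
    have h1 : HasDerivAt (fun y : ℝ => -b * y) (-b) x := by
      simpa using (hasDerivAt_id x).const_mul (-b)
    have h2 := (h1.exp).neg.div_const b
    refine h2.congr_deriv ?_
    field_simp
  have hint : IntegrableOn (fun x => Real.exp (-b * x)) (Set.Ioi a) :=
    exp_neg_integrableOn_Ioi a hb
  have htend : Tendsto (fun y => -Real.exp (-b * y) / b) atTop (nhds 0) := by
    have h1 : Tendsto (fun y : ℝ => -b * y) atTop atBot := by
      exact (tendsto_const_mul_atBot_of_neg (by linarith)).mpr tendsto_id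
    have := (Real.tendsto_exp_atBot.comp h1).neg.div_const b
    simpa using this
  have := integral_Ioi_of_hasDerivAt_of_tendsto' hderiv hint htend
  rw [this]
  field_simp
  ring


/-- Bounds on the iterated integrals `n_k(ν) = n_k(ν,∞)` of the paper, where
`n_0(λ) = 1` and `n_{k+1}(λ) = ∫_λ^∞ ((1 − θ(x))/(1 − x*))·n_k(x) dx`:
for every `ν > 1` and `k ≥ 1`, `n_k(ν) ≤ (1/k!)·(exp(−(ν − ν*))/(1 − ν*))^k`,
and consequently `1 ≤ ∑_{k≥0} n_k(ν) ≤ exp(exp(−(ν − ν*))/(1 − ν*))`. -/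
theorem nk_iterated_integral_bounds
    (θ d : ℝ → ℝ)
    (hθ : ∀ x : ℝ, 1 < x → θ x ∈ Set.Ioo (0 : ℝ) 1 ∧ 1 - θ x = Real.exp (-(x * θ x)))
    (hd : ∀ c : ℝ, 1 < c →
      d c ∈ Set.Ioo (0 : ℝ) 1 ∧ c * Real.exp (-c) = d c * Real.exp (-(d c)))
    (n : ℕ → ℝ → ℝ)
    (hn0 : ∀ l : ℝ, n 0 l = 1)
    (hnsucc : ∀ k : ℕ, ∀ l : ℝ, 1 < l →
      n (k + 1) l = ∫ x in Set.Ioi l, ((1 - θ x) / (1 - d x)) * n k x) :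
    ∀ ν : ℝ, 1 < ν →
      (∀ k : ℕ, 1 ≤ k →
        n k ν ≤ (1 / Nat.factorial k) * (Real.exp (-(ν - d ν)) / (1 - d ν)) ^ k) ∧
      1 ≤ ∑' k : ℕ, n k ν ∧
      ∑' k : ℕ, n k ν ≤ Real.exp (Real.exp (-(ν - d ν)) / (1 - d ν)) := by
  -- monotonicity of s ↦ s·e^{-s}
  have hderivf : ∀ s : ℝ, HasDerivAt (fun t => t * Real.exp (-t)) ((1 - s) * Real.exp (-s)) s := by
    intro s
    have h1 : HasDerivAt (fun t : ℝ => -t) (-1) s := (hasDerivAt_id s).neg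
    have := (hasDerivAt_id s).mul h1.exp
    refine this.congr_deriv ?_
    simp only [id_eq]
    ring
  have hcontf : Continuous (fun t : ℝ => t * Real.exp (-t)) := by continuity
  have hmono : StrictMonoOn (fun t : ℝ => t * Real.exp (-t)) (Set.Icc (0:ℝ) 1) := by
    apply strictMonoOn_of_deriv_pos (convex_Icc 0 1) hcontf.continuousOn
    intro s hs
    rw [interior_Icc] at hs
    rw [(hderivf s).deriv]
    exact mul_pos (by linarith [hs.2]) (Real.exp_pos _)
  have hanti : StrictAntiOn (fun t : ℝ => t * Real.exp (-t)) (Set.Ici (1:ℝ)) := by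
    apply strictAntiOn_of_deriv_neg (convex_Ici 1) hcontf.continuousOn
    intro s hs
    rw [interior_Ici] at hs
    rw [(hderivf s).deriv]
    exact mul_neg_of_neg_of_pos (by linarith [Set.mem_Ioi.mp hs]) (Real.exp_pos _)
  -- duality: d x = x (1 - θ x)
  have hdval : ∀ x : ℝ, 1 < x → d x = x * (1 - θ x) := by
    intro x hx
    obtain ⟨⟨hθ0, hθ1⟩, hθe⟩ := hθ x hx
    obtain ⟨⟨hd0, hd1⟩, hde⟩ := hd x hx
    set t := x * (1 - θ x) with ht
    have hte : t * Real.exp (-t) = x * Real.exp (-x) := by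
      rw [ht]
      have h0 : Real.exp (-(x * (1 - θ x))) = Real.exp (-x) * Real.exp (x * θ x) := by
        rw [← Real.exp_add]; congr 1; ring
      rw [h0]
      have h1 : (1 - θ x) * Real.exp (x * θ x) = 1 := by
        rw [hθe, ← Real.exp_add]; simp
      calc x * (1 - θ x) * (Real.exp (-x) * Real.exp (x * θ x))
          = x * Real.exp (-x) * ((1 - θ x) * Real.exp (x * θ x)) := by ring
        _ = x * Real.exp (-x) := by rw [h1, mul_one]
    have ht0 : 0 < t := mul_pos (by linarith) (by linarith)
    have ht1 : t < 1 := by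
      by_contra h
      push_neg at h
      have htx : t < x := by nlinarith
      have := hanti (Set.mem_Ici.mpr h) (Set.mem_Ici.mpr hx.le) htx
      simp only at this
      linarith
    have : d x = t := by
      apply hmono.injOn (Set.mem_Icc.mpr ⟨hd0.le, hd1.le⟩) (Set.mem_Icc.mpr ⟨ht0.le, ht1.le⟩)
      show d x * Real.exp (-(d x)) = t * Real.exp (-t)
      rw [← hde, hte]
    rw [this]
  -- 1 - θ x = exp(-(x - d x))
  have hθval : ∀ x : ℝ, 1 < x → 1 - θ x = Real.exp (-(x - d x)) := by
    intro x hx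
    rw [(hθ x hx).2, hdval x hx]
    congr 1
    ring
  -- d is antitone
  have hdmono : ∀ x y : ℝ, 1 < x → x ≤ y → d y ≤ d x := by
    intro x y hx hxy
    have hy : 1 < y := lt_of_lt_of_le hx hxy
    obtain ⟨⟨hdx0, hdx1⟩, hdex⟩ := hd x hx
    obtain ⟨⟨hdy0, hdy1⟩, hdey⟩ := hd y hy
    by_contra h
    push_neg at h
    have h1 := hmono (Set.mem_Icc.mpr ⟨hdx0.le, hdx1.le⟩) (Set.mem_Icc.mpr ⟨hdy0.le, hdy1.le⟩) h
    simp only at h1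
    have h2 : y * Real.exp (-y) ≤ x * Real.exp (-x) := by
      rcases eq_or_lt_of_le hxy with rfl | hlt
      · exact le_refl _
      · have := hanti (Set.mem_Ici.mpr hx.le) (Set.mem_Ici.mpr hy.le) hlt
        simp only at this
        linarith
    linarith
  intro ν hν
  obtain ⟨⟨hdν0, hdν1⟩, _⟩ := hd ν hν
  set C : ℝ := Real.exp (d ν) / (1 - d ν) with hC
  have hC0 : 0 < C := div_pos (Real.exp_pos _) (by linarith)
  -- bound on the weight
  have hw : ∀ x : ℝ, ν ≤ x → (1 - θ x) / (1 - d x) ≤ C * Real.exp (-x) := by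
    intro x hx
    have hx1 : 1 < x := lt_of_lt_of_le hν hx
    obtain ⟨⟨hdx0, hdx1⟩, _⟩ := hd x hx1
    have h1 : 1 - θ x = Real.exp (-x) * Real.exp (d x) := by
      rw [hθval x hx1, ← Real.exp_add]
      congr 1
      ring
    have hdle := hdmono ν x hν hx
    have key : (Real.exp (-x) * Real.exp (d x)) / (1 - d x)
        ≤ (Real.exp (-x) * Real.exp (d ν)) / (1 - d ν) := by
      apply div_le_div₀ (by positivity) ?_ (by linarith) (by linarith)
      have := Real.exp_le_exp.mpr hdle
      nlinarith [Real.exp_pos (-x)]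
    rw [h1]
    calc (Real.exp (-x) * Real.exp (d x)) / (1 - d x)
        ≤ (Real.exp (-x) * Real.exp (d ν)) / (1 - d ν) := key
      _ = C * Real.exp (-x) := by rw [hC]; ring
  have hw0 : ∀ x : ℝ, 1 < x → 0 ≤ (1 - θ x) / (1 - d x) := by
    intro x hx
    obtain ⟨⟨h1, h2⟩, _⟩ := hθ x hx
    obtain ⟨⟨h3, h4⟩, _⟩ := hd x hx
    exact div_nonneg (by linarith) (by linarith)
  -- nonnegativity of n
  have hnn : ∀ k : ℕ, ∀ l : ℝ, 1 < l → 0 ≤ n k l := by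
    intro k
    induction k with
    | zero => intro l _; rw [hn0]; norm_num
    | succ k ih =>
      intro l hl
      rw [hnsucc k l hl]
      apply setIntegral_nonneg measurableSet_Ioi
      intro x hx
      have hx1 : 1 < x := lt_trans hl (Set.mem_Ioi.mp hx)
      exact mul_nonneg (hw0 x hx1) (ih x hx1)
  -- main inductive bound
  have hmain : ∀ k : ℕ, ∀ l : ℝ, ν ≤ l →
      n k l ≤ (1 / Nat.factorial k) * (C * Real.exp (-l)) ^ k := by
    intro k
    induction k with
    | zero => intro l _; rw [hn0]; simp
    | succ k ih =>
      intro l hl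
      have hl1 : 1 < l := lt_of_lt_of_le hν hl
      rw [hnsucc k l hl1]
      have hb : (0:ℝ) < (k + 1 : ℝ) := by positivity
      have hint : IntegrableOn
          (fun x => (C ^ (k+1) / Nat.factorial k) * Real.exp (-(k+1 : ℝ) * x))
          (Set.Ioi l) := (exp_neg_integrableOn_Ioi l hb).const_mul _
      have hle : (∫ x in Set.Ioi l, ((1 - θ x) / (1 - d x)) * n k x)
          ≤ ∫ x in Set.Ioi l, (C ^ (k+1) / Nat.factorial k) * Real.exp (-(k+1 : ℝ) * x) := by
        apply integral_mono_of_nonneg ?_ hint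
        · filter_upwards [ae_restrict_mem measurableSet_Ioi] with x hx
          have hxl : l < x := Set.mem_Ioi.mp hx
          have hx1 : 1 < x := lt_trans hl1 hxl
          have hxν : ν ≤ x := le_trans hl hxl.le
          have h1 := hw x hxν
          have h2 := ih x hxν
          have h4 := hnn k x hx1
          have hexp : Real.exp (-(k+1:ℝ) * x) = (Real.exp (-x)) ^ (k+1) := by
            rw [← Real.exp_nat_mul]
            congr 1
            push_cast
            ring
          calc ((1 - θ x) / (1 - d x)) * n k x
              ≤ (C * Real.exp (-x)) * ((1 / Nat.factorial k) * (C * Real.exp (-x)) ^ k) := by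
                apply mul_le_mul h1 h2 h4 (by positivity)
            _ = (C ^ (k+1) / Nat.factorial k) * (Real.exp (-x)) ^ (k+1) := by ring
            _ = (C ^ (k+1) / Nat.factorial k) * Real.exp (-(k+1:ℝ) * x) := by rw [hexp]
        · filter_upwards [ae_restrict_mem measurableSet_Ioi] with x hx
          have hx1 : 1 < x := lt_trans hl1 (Set.mem_Ioi.mp hx)
          exact mul_nonneg (hw0 x hx1) (hnn k x hx1)
      refine le_trans hle ?_
      rw [MeasureTheory.integral_const_mul, my_integral_exp_neg_mul_Ioi hb l]
      have hexp : Real.exp (-(k+1:ℝ) * l) = (Real.exp (-l)) ^ (k+1) := by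
        rw [← Real.exp_nat_mul]
        congr 1
        push_cast
        ring
      rw [hexp, Nat.factorial_succ]
      have hfac : (0:ℝ) < Nat.factorial k := by positivity
      rw [mul_pow]
      push_cast
      field_simp
      apply le_of_eq
      ring
  -- translate the bound base
  have hCe : C * Real.exp (-ν) = Real.exp (-(ν - d ν)) / (1 - d ν) := by
    rw [hC, div_mul_eq_mul_div, ← Real.exp_add]
    congr 2
    ring
  have hbound : ∀ k : ℕ, n k ν ≤ (C * Real.exp (-ν)) ^ k / Nat.factorial k := by
    intro k
    have h1 := hmain k ν le_rfl
    have h2 : (1 / (Nat.factorial k : ℝ)) * (C * Real.exp (-ν)) ^ k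
        = (C * Real.exp (-ν)) ^ k / Nat.factorial k := by ring
    linarith
  have hsum2 : Summable (fun k : ℕ => (C * Real.exp (-ν)) ^ k / Nat.factorial k) :=
    Real.summable_pow_div_factorial _
  have hsumn : Summable (fun k : ℕ => n k ν) :=
    Summable.of_nonneg_of_le (fun k => hnn k ν hν) hbound hsum2
  refine ⟨?_, ?_, ?_⟩
  · intro k _
    have := hmain k ν le_rfl
    rwa [hCe] at this
  · have h := Summable.le_tsum hsumn 0 (fun i _ => hnn i ν hν)
    rw [hn0] at h
    exact h
  · have h := Summable.tsum_le_tsum hbound hsumn hsum2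
    have hexp : ∑' k : ℕ, (C * Real.exp (-ν)) ^ k / Nat.factorial k
        = Real.exp (C * Real.exp (-ν)) := by
      rw [Real.exp_eq_exp_ℝ, NormedSpace.exp_eq_tsum_div]
    rw [hexp, hCe] at h
    exact h
end
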